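/- arXiv:1805.01999 — 9 statements merged into one kernel-verified Lean document; each statement's English description precedes it below -/
import Mathlib

section
/- Let 0<q<1. For all x>0, one has (q^x log q)/(1-q^x) + log[x]_q < ψ_q(x) < log[x]_q. -/
open Real

/-- The q-digamma function: ψ_q(x) = -log(1-q) + (log q)·∑_{n=1}^∞ q^{nx}/(1-q^n). -/
noncomputable def qDigamma (q x : ℝ) : ℝ :=
  -Real.log (1 - q) + Real.log q * ∑' n : ℕ, q ^ (((n : ℝ) + 1) * x) / (1 - q ^ (n + 1))

/-- The q-gamma function: Γ_q(x) = (q;q)_∞/(q^x;q)_∞ · (1-q)^{1-x}. -/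
noncomputable def qGamma (q x : ℝ) : ℝ :=
  ((∏' i : ℕ, (1 - q ^ (i + 1))) / ∏' i : ℕ, (1 - q ^ (x + (i : ℝ)))) * (1 - q) ^ (1 - x)

/-- The q-bracket: [x]_q = (1-q^x)/(1-q). -/
noncomputable def qBracket (q x : ℝ) : ℝ := (1 - q ^ x) / (1 - q)

/-!
Put `a = q ^ x`. Since `log [x]_q = log (1 - a) - log (1 - q)` and `-log (1 - a) = ∑ aⁿ / n`,
`ψ_q(x) - log [x]_q = ∑_{n ≥ 1} aⁿ (log q / (1 - qⁿ) + 1 / n)`. Each coefficient lies strictly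
between `log q` and `0`: at `t = qⁿ` these are `log t < t - 1` and `0 < 1 - t + t log t`.
Summing against `aⁿ > 0`, and using `∑ aⁿ log q = a log q / (1 - a)`, gives both bounds.
-/

lemma Real.one_sub_add_mul_log_pos {t : ℝ} (h0 : 0 < t) (h1 : t < 1) : 0 < 1 - t + t * log t := by
  have h := log_lt_sub_one_of_pos (inv_pos.2 h0) (inv_ne_one.2 h1.ne)
  rw [log_inv] at h
  have := mul_lt_mul_of_pos_left h h0
  rw [mul_sub, mul_inv_cancel₀ h0.ne'] at this
  linarith

section Coefficients

variable {q : ℝ} (hq0 : 0 < q) (hq1 : q < 1) {k : ℕ} (hk : k ≠ 0)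
include hq0 hq1 hk

lemma log_div_one_sub_pow_add_inv_neg : log q / (1 - q ^ k) + (k : ℝ)⁻¹ < 0 := by
  have hqk : 0 < 1 - q ^ k := sub_pos.2 (pow_lt_one₀ hq0.le hq1 hk)
  have h := log_lt_sub_one_of_pos (pow_pos hq0 k) (by linarith)
  rw [log_pow] at h
  calc log q / (1 - q ^ k) + (k : ℝ)⁻¹ = (k * log q + (1 - q ^ k)) / ((1 - q ^ k) * k) := by
        field_simp
    _ < 0 := div_neg_of_neg_of_pos (by linarith) (by positivity)

lemma log_lt_log_div_one_sub_pow_add_inv : log q < log q / (1 - q ^ k) + (k : ℝ)⁻¹ := by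
  have hqk : 0 < 1 - q ^ k := sub_pos.2 (pow_lt_one₀ hq0.le hq1 hk)
  have h := Real.one_sub_add_mul_log_pos (pow_pos hq0 k) (by linarith)
  rw [log_pow] at h
  rw [← sub_pos]
  calc 0 < (1 - q ^ k + q ^ k * (k * log q)) / ((1 - q ^ k) * k) := div_pos h (by positivity)
    _ = log q / (1 - q ^ k) + (k : ℝ)⁻¹ - log q := by field_simp; ring

end Coefficients

lemma summable_pow_succ_div_one_sub_pow_succ {a q : ℝ} (ha0 : 0 ≤ a) (ha1 : a < 1)
    (hq0 : 0 ≤ q) (hq1 : q < 1) : Summable fun n : ℕ ↦ a ^ (n + 1) / (1 - q ^ (n + 1)) := by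
  refine Summable.of_nonneg_of_le (fun n ↦ ?_) (fun n ↦ ?_)
    (((summable_geometric_of_lt_one ha0 ha1).comp_injective (add_left_injective 1)).div_const
      (1 - q))
  · exact div_nonneg (pow_nonneg ha0 _) (sub_nonneg.2 (pow_le_one₀ hq0 hq1.le))
  · exact div_le_div_of_nonneg_left (pow_nonneg ha0 _) (sub_pos.2 hq1)
      (sub_le_sub_left (pow_le_of_le_one hq0 hq1.le n.succ_ne_zero) 1)

lemma hasSum_qDigamma_sub_log_qBracket {q x : ℝ} (hq0 : 0 < q) (hq1 : q < 1) (hx : 0 < x) :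
    HasSum (fun n : ℕ ↦ (q ^ x) ^ (n + 1) * (log q / (1 - q ^ (n + 1)) + ((n + 1 : ℕ) : ℝ)⁻¹))
      (qDigamma q x - log (qBracket q x)) := by
  have ha0 : 0 < q ^ x := rpow_pos_of_pos hq0 x
  have ha1 : q ^ x < 1 := rpow_lt_one hq0.le hq1 hx
  have hpow (n : ℕ) : q ^ (((n : ℝ) + 1) * x) = (q ^ x) ^ (n + 1) := by
    rw [← rpow_mul_natCast hq0.le, Nat.cast_succ, mul_comm]
  have hlog := hasSum_pow_div_log_of_abs_lt_one (abs_lt.2 ⟨by linarith, ha1⟩)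
  have hsum := ((summable_pow_succ_div_one_sub_pow_succ ha0.le ha1 hq0.le hq1).hasSum.mul_left
    (log q)).add hlog
  have hvalue : qDigamma q x - log (qBracket q x) =
      log q * ∑' n : ℕ, (q ^ x) ^ (n + 1) / (1 - q ^ (n + 1)) + -log (1 - q ^ x) := by
    rw [qDigamma, qBracket, log_div (by linarith) (by linarith), tsum_congr fun n ↦ by rw [hpow n]]
    ring
  rw [hvalue]
  exact hsum.congr_fun fun n ↦ by push_cast; ring

/-- (q^x log q)/(1-q^x) + log[x]_q < ψ_q(x) < log[x]_q for x > 0. -/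
theorem qDigamma_log_qBracket_bounds (q : ℝ) (hq0 : 0 < q) (hq1 : q < 1)
    (x : ℝ) (hx : 0 < x) :
    q ^ x * Real.log q / (1 - q ^ x) + Real.log (qBracket q x) < qDigamma q x ∧
    qDigamma q x < Real.log (qBracket q x) := by
  have ha0 : 0 < q ^ x := rpow_pos_of_pos hq0 x
  have ha1 : q ^ x < 1 := rpow_lt_one hq0.le hq1 hx
  have hsum := hasSum_qDigamma_sub_log_qBracket hq0 hq1 hx
  have hgeom : HasSum (fun n : ℕ ↦ (q ^ x) ^ (n + 1) * log q) (q ^ x * log q / (1 - q ^ x)) := by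
    rw [div_eq_mul_inv]
    exact ((hasSum_geometric_of_lt_one ha0.le ha1).mul_left _).congr_fun fun n ↦ by ring
  have hlower (n : ℕ) := mul_lt_mul_of_pos_left
    (log_lt_log_div_one_sub_pow_add_inv hq0 hq1 n.succ_ne_zero) (pow_pos ha0 (n + 1))
  have hupper (n : ℕ) := mul_neg_of_pos_of_neg (pow_pos ha0 (n + 1))
    (log_div_one_sub_pow_add_inv_neg hq0 hq1 n.succ_ne_zero)
  constructor
  · linarith [hasSum_lt (fun n ↦ (hlower n).le) (hlower 0) hgeom hsum]
  · linarith [hasSum_lt (fun n ↦ (hupper n).le) (hupper 0) hsum hasSum_zero]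
end

section
/- Let 0<q<1. The q-digamma function ψ_q has a unique zero x₀ in the interval (1,2): there exists x₀ ∈ (1,2) with ψ_q(x₀)=0, and ψ_q(x)≠0 for every x ∈ (1,2) with x ≠ x₀ (indeed ψ_q(x)≠0 for every positive x ≠ x₀). -/
open Real

/-!
Since `-log (1 - q) = ∑ q^n / n`, the q-digamma function is the single series
`ψ_q(x) = ∑_{n ≥ 1} (q^n / n + log q · q^(n x) / (1 - q^n))`. As `log q < 0`, every term is
strictly increasing in `x`, so `ψ_q` is strictly increasing on `(0, ∞)`; it is also continuous.
Writing `y = q^n ∈ (0, 1)`, the `n`-th term has the sign of `1 - y + log y < 0` at `x = 1` and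
of `1 - y + y log y > 0` at `x = 2`; both are `log t < t - 1`, for `t = y` and `t = 1 / y`.
The intermediate value theorem gives a zero in `(1, 2)`, and monotonicity makes it unique.
-/

section

variable {q : ℝ}

lemma one_sub_pow_succ_pos (hq0 : 0 ≤ q) (hq1 : q < 1) (n : ℕ) : 0 < 1 - q ^ (n + 1) :=
  sub_pos.2 (pow_lt_one₀ hq0 hq1 n.succ_ne_zero)

lemma rpow_succ_mul (hq0 : 0 ≤ q) (n : ℕ) (x : ℝ) :
    q ^ (((n : ℝ) + 1) * x) = (q ^ x) ^ (n + 1) := by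
  rw [mul_comm, ← rpow_mul_natCast hq0]
  push_cast
  rfl

lemma qDigamma_term_le (hq0 : 0 < q) (hq1 : q < 1) (n : ℕ) (x : ℝ) :
    q ^ (((n : ℝ) + 1) * x) / (1 - q ^ (n + 1)) ≤ (q ^ x) ^ (n + 1) / (1 - q) := by
  rw [rpow_succ_mul hq0.le]
  exact div_le_div_of_nonneg_left (by positivity) (sub_pos.2 hq1)
    (sub_le_sub_left (pow_le_of_le_one hq0.le hq1.le n.succ_ne_zero) 1)

lemma qDigamma_term_strictAnti (hq0 : 0 < q) (hq1 : q < 1) (n : ℕ) :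
    StrictAnti fun x : ℝ => q ^ (((n : ℝ) + 1) * x) / (1 - q ^ (n + 1)) := fun _ _ hxy =>
  div_lt_div_of_pos_right (rpow_lt_rpow_of_exponent_gt hq0 hq1 (by gcongr))
    (one_sub_pow_succ_pos hq0.le hq1 n)

lemma summable_qDigamma_term (hq0 : 0 < q) (hq1 : q < 1) {x : ℝ} (hx : 0 < x) :
    Summable fun n : ℕ => q ^ (((n : ℝ) + 1) * x) / (1 - q ^ (n + 1)) := by
  refine Summable.of_nonneg_of_le (fun n => ?_) (fun n => qDigamma_term_le hq0 hq1 n x)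
    (((summable_nat_add_iff 1).2 (summable_geometric_of_lt_one (by positivity)
      (rpow_lt_one hq0.le hq1 hx))).div_const (1 - q))
  have := one_sub_pow_succ_pos hq0.le hq1 n
  positivity

lemma hasSum_qDigamma (hq0 : 0 < q) (hq1 : q < 1) {x : ℝ} (hx : 0 < x) :
    HasSum (fun n : ℕ => q ^ (n + 1) / ((n : ℝ) + 1) +
      log q * (q ^ (((n : ℝ) + 1) * x) / (1 - q ^ (n + 1)))) (qDigamma q x) := by
  have hlog := hasSum_pow_div_log_of_abs_lt_one (show |q| < 1 by rwa [abs_of_pos hq0])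
  exact hlog.add ((summable_qDigamma_term hq0 hq1 hx).hasSum.mul_left (log q))

lemma strictMonoOn_qDigamma (hq0 : 0 < q) (hq1 : q < 1) :
    StrictMonoOn (qDigamma q) (Set.Ioi 0) := by
  intro x hx y hy hxy
  have hlt (n : ℕ) : log q * (q ^ (((n : ℝ) + 1) * x) / (1 - q ^ (n + 1))) <
      log q * (q ^ (((n : ℝ) + 1) * y) / (1 - q ^ (n + 1))) :=
    mul_lt_mul_of_neg_left (qDigamma_term_strictAnti hq0 hq1 n hxy) (log_neg hq0 hq1)
  exact hasSum_lt (fun n => by linarith [hlt n]) (i := 0) (by linarith [hlt 0])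
    (hasSum_qDigamma hq0 hq1 hx) (hasSum_qDigamma hq0 hq1 hy)

lemma log_mul_div_one_sub_pow_lt (hq0 : 0 < q) (hq1 : q < 1) (n : ℕ) :
    log q * (q ^ (n + 1) / (1 - q ^ (n + 1))) < -(q ^ (n + 1) / ((n : ℝ) + 1)) := by
  set y := q ^ (n + 1)
  have hy0 : 0 < y := by positivity
  have hy1 : 0 < 1 - y := one_sub_pow_succ_pos hq0.le hq1 n
  have hm : (0 : ℝ) < n + 1 := by positivity
  have hlog : ((n : ℝ) + 1) * log q < y - 1 := by
    have := log_lt_sub_one_of_pos hy0 (by linarith)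
    rwa [log_pow, Nat.cast_succ] at this
  calc log q * (y / (1 - y)) < (y - 1) / (n + 1) * (y / (1 - y)) := by
        gcongr
        rwa [lt_div_iff₀ hm, mul_comm]
    _ = -(y / (n + 1)) := by field_simp; ring

lemma qDigamma_one_neg (hq0 : 0 < q) (hq1 : q < 1) : qDigamma q 1 < 0 := by
  have hneg (n : ℕ) : q ^ (n + 1) / ((n : ℝ) + 1) +
      log q * (q ^ (((n : ℝ) + 1) * 1) / (1 - q ^ (n + 1))) < 0 := by
    rw [rpow_succ_mul hq0.le, rpow_one]
    linarith [log_mul_div_one_sub_pow_lt hq0 hq1 n]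
  exact hasSum_lt (fun n => (hneg n).le) (hneg 0) (hasSum_qDigamma hq0 hq1 one_pos) hasSum_zero

lemma lt_log_mul_sq_div_one_sub_pow (hq0 : 0 < q) (hq1 : q < 1) (n : ℕ) :
    -(q ^ (n + 1) / ((n : ℝ) + 1)) < log q * ((q ^ (n + 1)) ^ 2 / (1 - q ^ (n + 1))) := by
  set y := q ^ (n + 1)
  have hy0 : 0 < y := by positivity
  have hy1 : 0 < 1 - y := one_sub_pow_succ_pos hq0.le hq1 n
  have hm : (0 : ℝ) < n + 1 := by positivity
  have hlog : y - 1 < ((n : ℝ) + 1) * log q * y := by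
    have := log_lt_sub_one_of_pos (inv_pos.2 hy0) (by simp; linarith)
    rw [log_inv, log_pow, Nat.cast_succ] at this
    have := mul_lt_mul_of_pos_right this hy0
    rwa [sub_mul, inv_mul_cancel₀ hy0.ne', one_mul, neg_mul, neg_lt, neg_sub] at this
  calc -(y / (n + 1)) = (y - 1) / ((n + 1) * y) * (y ^ 2 / (1 - y)) := by
        field_simp; ring
    _ < log q * (y ^ 2 / (1 - y)) := by
        gcongr
        rw [div_lt_iff₀ (by positivity)]
        linarith

lemma qDigamma_two_pos (hq0 : 0 < q) (hq1 : q < 1) : 0 < qDigamma q 2 := by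
  have hpos (n : ℕ) : 0 < q ^ (n + 1) / ((n : ℝ) + 1) +
      log q * (q ^ (((n : ℝ) + 1) * 2) / (1 - q ^ (n + 1))) := by
    rw [rpow_succ_mul hq0.le, rpow_two, pow_right_comm]
    linarith [lt_log_mul_sq_div_one_sub_pow hq0 hq1 n]
  exact hasSum_lt (fun n => (hpos n).le) (hpos 0) hasSum_zero
    (hasSum_qDigamma hq0 hq1 zero_lt_two)

lemma continuousOn_qDigamma_Ici (hq0 : 0 < q) (hq1 : q < 1) {a : ℝ} (ha : 0 < a) :
    ContinuousOn (qDigamma q) (Set.Ici a) := by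
  refine continuousOn_const.add (continuousOn_const.mul ?_)
  refine continuousOn_tsum (fun n => Continuous.continuousOn ?_)
    (summable_qDigamma_term hq0 hq1 ha) fun n x hx => ?_
  · exact (continuous_const.rpow (continuous_const.mul continuous_id)
      fun _ => Or.inl hq0.ne').div_const _
  · have := one_sub_pow_succ_pos hq0.le hq1 n
    rw [norm_of_nonneg (by positivity)]
    exact (qDigamma_term_strictAnti hq0 hq1 n).antitone hx

lemma continuousOn_qDigamma (hq0 : 0 < q) (hq1 : q < 1) :
    ContinuousOn (qDigamma q) (Set.Ioi 0) :=
  fun _ hx => ((continuousOn_qDigamma_Ici hq0 hq1 (half_pos hx)).continuousAt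
    (Ici_mem_nhds (half_lt_self hx))).continuousWithinAt

end

/-- ψ_q has a unique zero x₀, which lies in (1,2); ψ_q(x) ≠ 0 for every
positive x ≠ x₀. -/
theorem qDigamma_unique_zero (q : ℝ) (hq0 : 0 < q) (hq1 : q < 1) :
    ∃ x₀ ∈ Set.Ioo (1 : ℝ) 2, qDigamma q x₀ = 0 ∧
      ∀ x : ℝ, 0 < x → x ≠ x₀ → qDigamma q x ≠ 0 := by
  have hcont : ContinuousOn (qDigamma q) (Set.Icc 1 2) :=
    (continuousOn_qDigamma hq0 hq1).mono fun x hx => one_pos.trans_le hx.1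
  obtain ⟨x₀, hx₀, hzero⟩ := intermediate_value_Ioo one_le_two hcont
    ⟨qDigamma_one_neg hq0 hq1, qDigamma_two_pos hq0 hq1⟩
  have hx₀pos : (0 : ℝ) < x₀ := one_pos.trans hx₀.1
  refine ⟨x₀, hx₀, hzero, fun x hx hne => ?_⟩
  rw [← hzero]
  exact (strictMonoOn_qDigamma hq0 hq1).injOn.ne hx hx₀pos hne
end

section
/- Let 0<q<1 and let x₀ ∈ (1,2) be the unique positive zero of the q-digamma function ψ_q. Then Γ_q(x) ≥ Γ_q(x₀) for all x ∈ (0,∞); moreover Γ_q is strictly decreasing on (0,x₀) and strictly increasing on (x₀,∞). -/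
open Real

/-! Writing `log Γ_q(x) = log (q;q)_∞ - ∑ᵢ log (1 - q^(x+i)) + (1 - x) log (1 - q)` and
differentiating termwise gives `-log (1 - q) + log q ∑ᵢ q^(x+i) / (1 - q^(x+i))`; expanding each
summand as a geometric series and swapping the double sum turns this into the series defining
`ψ_q`. Since `log q < 0` and each `q^((n+1)x)` decreases in `x`, `ψ_q` is strictly increasing on
`(0, ∞)`, hence negative before its zero `x₀` and positive after it. -/

open Set

lemma hasSum_geometric_add_one_of_lt_one {a : ℝ} (h0 : 0 ≤ a) (h1 : a < 1) :
    HasSum (fun n : ℕ => a ^ (n + 1)) (a / (1 - a)) := by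
  simpa only [← pow_succ', div_eq_mul_inv] using (hasSum_geometric_of_lt_one h0 h1).mul_left a

lemma strictAntiOn_Ioc_and_strictMonoOn_Ici_of_hasDerivAt {f f' : ℝ → ℝ} {a x₀ : ℝ}
    (hax₀ : a < x₀) (hf : ∀ x ∈ Ioi a, HasDerivAt f (f' x) x) (hf' : StrictMonoOn f' (Ioi a))
    (hx₀ : f' x₀ = 0) : StrictAntiOn f (Ioc a x₀) ∧ StrictMonoOn f (Ici x₀) := by
  have hcont : ContinuousOn f (Ioi a) := fun x hx => (hf x hx).continuousAt.continuousWithinAt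
  have hIci : Ici x₀ ⊆ Ioi a := Ici_subset_Ioi.2 hax₀
  constructor
  · refine strictAntiOn_of_hasDerivWithinAt_neg (f' := f') (convex_Ioc a x₀)
      (hcont.mono Ioc_subset_Ioi_self) (fun x hx => ?_) fun x hx => ?_ <;>
      rw [interior_Ioc] at hx
    · exact (hf x hx.1).hasDerivWithinAt
    · exact hx₀ ▸ hf' hx.1 hax₀ hx.2
  · refine strictMonoOn_of_hasDerivWithinAt_pos (f' := f') (convex_Ici x₀) (hcont.mono hIci)
      (fun x hx => ?_) fun x hx => ?_ <;>
      rw [interior_Ici] at hx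
    · exact (hf x (hax₀.trans hx)).hasDerivWithinAt
    · exact hx₀ ▸ hf' hax₀ (hax₀.trans hx) hx

namespace QGamma

variable {q : ℝ}

lemma rpow_add_natCast_lt_one (hq0 : 0 < q) (hq1 : q < 1) {x : ℝ} (hx : 0 < x) (i : ℕ) :
    q ^ (x + i) < 1 :=
  rpow_lt_one hq0.le hq1 (by positivity)

lemma summable_rpow_add_natCast (hq0 : 0 < q) (hq1 : q < 1) (x : ℝ) :
    Summable fun i : ℕ => q ^ (x + i) := by
  simp_rw [rpow_add hq0, rpow_natCast]
  exact (summable_geometric_of_lt_one hq0.le hq1).mul_left _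

lemma summable_log_one_sub_rpow (hq0 : 0 < q) (hq1 : q < 1) (x : ℝ) :
    Summable fun i : ℕ => log (1 - q ^ (x + i)) := by
  simpa [sub_eq_add_neg] using
    Real.summable_log_one_add_of_summable (summable_rpow_add_natCast hq0 hq1 x).neg

lemma rpow_div_one_sub_rpow_le (hq0 : 0 < q) (hq1 : q < 1) {x y : ℝ} (hx : 0 < x) (hxy : x ≤ y) :
    q ^ y / (1 - q ^ y) ≤ q ^ x / (1 - q ^ x) := by
  have hqyx : q ^ y ≤ q ^ x := rpow_le_rpow_of_exponent_ge hq0 hq1.le hxy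
  have hqx : q ^ x < 1 := rpow_lt_one hq0.le hq1 hx
  exact div_le_div₀ (by positivity) hqyx (by linarith) (by linarith)

lemma summable_rpow_div_one_sub_rpow (hq0 : 0 < q) (hq1 : q < 1) {x : ℝ} (hx : 0 < x) :
    Summable fun i : ℕ => q ^ (x + i) / (1 - q ^ (x + i)) := by
  have hqx : q ^ x < 1 := rpow_lt_one hq0.le hq1 hx
  refine .of_nonneg_of_le (fun i => ?_) (fun i => ?_)
    ((summable_rpow_add_natCast hq0 hq1 x).div_const (1 - q ^ x))
  · exact div_nonneg (by positivity) (sub_pos.2 (rpow_add_natCast_lt_one hq0 hq1 hx i)).le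
  · have hle : q ^ (x + i) ≤ q ^ x :=
      rpow_le_rpow_of_exponent_ge hq0 hq1.le (le_add_of_nonneg_right i.cast_nonneg)
    exact div_le_div_of_nonneg_left (by positivity) (by linarith) (by linarith)

/-- `logQPochhammer q x = log (q^x; q)_∞`. -/
noncomputable def logQPochhammer (q x : ℝ) : ℝ := ∑' i : ℕ, log (1 - q ^ (x + i))

lemma tprod_one_sub_rpow_eq_exp (hq0 : 0 < q) (hq1 : q < 1) {x : ℝ} (hx : 0 < x) :
    ∏' i : ℕ, (1 - q ^ (x + i)) = exp (logQPochhammer q x) :=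
  (rexp_tsum_eq_tprod (fun i => sub_pos.2 (rpow_add_natCast_lt_one hq0 hq1 hx i))
    (summable_log_one_sub_rpow hq0 hq1 x)).symm

noncomputable def logQGamma (q x : ℝ) : ℝ :=
  logQPochhammer q 1 - logQPochhammer q x + log (1 - q) * (1 - x)

lemma qGamma_eq_exp_logQGamma (hq0 : 0 < q) (hq1 : q < 1) {x : ℝ} (hx : 0 < x) :
    qGamma q x = exp (logQGamma q x) := by
  have hnum : ∏' i : ℕ, (1 - q ^ (i + 1)) = exp (logQPochhammer q 1) := by
    rw [← tprod_one_sub_rpow_eq_exp hq0 hq1 one_pos]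
    congr! 2 with i
    rw [add_comm (1 : ℝ), ← Nat.cast_add_one, rpow_natCast]
  rw [qGamma, logQGamma, hnum, tprod_one_sub_rpow_eq_exp hq0 hq1 hx,
    rpow_def_of_pos (sub_pos.2 hq1), exp_add, exp_sub]

lemma hasDerivAt_log_one_sub_rpow (hq0 : 0 < q) (hq1 : q < 1) {y : ℝ} (hy : 0 < y) (i : ℕ) :
    HasDerivAt (fun z : ℝ => log (1 - q ^ (z + i)))
      (-log q * (q ^ (y + i) / (1 - q ^ (y + i)))) y := by
  have hpow : HasDerivAt (fun z : ℝ => q ^ (z + i)) (q ^ (y + i) * log q) y := by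
    have := (hasStrictDerivAt_const_rpow hq0 (y + i)).hasDerivAt.comp y
      ((hasDerivAt_id y).add_const (i : ℝ))
    rwa [mul_one] at this
  refine (((hasDerivAt_const y 1).sub hpow).log
    (sub_pos.2 (rpow_add_natCast_lt_one hq0 hq1 hy i)).ne').congr_deriv ?_
  simp only [Pi.sub_apply]
  ring

lemma hasDerivAt_logQPochhammer (hq0 : 0 < q) (hq1 : q < 1) {x : ℝ} (hx : 0 < x) :
    HasDerivAt (logQPochhammer q) (-log q * ∑' i : ℕ, q ^ (x + i) / (1 - q ^ (x + i))) x := by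
  have hc : 0 < x / 2 := by positivity
  have hxc : x ∈ Ioi (x / 2) := by simp [hx]
  rw [← tsum_mul_left]
  refine hasDerivAt_tsum_of_isPreconnected
    ((summable_rpow_div_one_sub_rpow hq0 hq1 hc).mul_left |log q|) isOpen_Ioi isPreconnected_Ioi
    (fun i y hy => hasDerivAt_log_one_sub_rpow hq0 hq1 (hc.trans hy) i) (fun i y hy => ?_)
    hxc (summable_log_one_sub_rpow hq0 hq1 x) hxc
  have hy : x / 2 < y := hy
  have hi : (0 : ℝ) ≤ i := i.cast_nonneg
  have hy' : 0 < y + i := by linarith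
  have hqy : q ^ (y + i) < 1 := rpow_lt_one hq0.le hq1 hy'
  rw [norm_mul, norm_neg, Real.norm_eq_abs,
    Real.norm_of_nonneg (div_nonneg (rpow_nonneg hq0.le _) (sub_pos.2 hqy).le)]
  exact mul_le_mul_of_nonneg_left (rpow_div_one_sub_rpow_le hq0 hq1 (by positivity)
    (by linarith)) (abs_nonneg _)

lemma rpow_add_natCast_pow_succ (hq0 : 0 < q) (x : ℝ) (i n : ℕ) :
    (q ^ (x + i)) ^ (n + 1) = q ^ (((n : ℝ) + 1) * x) * (q ^ (n + 1)) ^ i := by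
  rw [rpow_add hq0, rpow_natCast, mul_pow, ← pow_mul, ← pow_mul, mul_comm i, mul_comm _ x,
    rpow_mul hq0.le, ← Nat.cast_add_one, rpow_natCast]

/-- Both sides are the sum of `q ^ ((x + i) * (n + 1))` over `(i, n) : ℕ × ℕ`. -/
lemma hasSum_rpow_div_one_sub_pow (hq0 : 0 < q) (hq1 : q < 1) {x : ℝ} (hx : 0 < x) :
    HasSum (fun n : ℕ => q ^ (((n : ℝ) + 1) * x) / (1 - q ^ (n + 1)))
      (∑' i : ℕ, q ^ (x + i) / (1 - q ^ (x + i))) := by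
  set f : ℕ × ℕ → ℝ := fun p => (q ^ (x + p.1)) ^ (p.2 + 1)
  have hrow (i : ℕ) : HasSum (fun n => f (i, n)) (q ^ (x + i) / (1 - q ^ (x + i))) :=
    hasSum_geometric_add_one_of_lt_one (rpow_nonneg hq0.le _) (rpow_add_natCast_lt_one hq0 hq1 hx i)
  have hcol (n : ℕ) : HasSum (fun i => f (i, n)) (q ^ (((n : ℝ) + 1) * x) / (1 - q ^ (n + 1))) := by
    simp only [f, rpow_add_natCast_pow_succ hq0, div_eq_mul_inv]
    exact (hasSum_geometric_of_lt_one (by positivity)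
      (pow_lt_one₀ hq0.le hq1 n.succ_ne_zero)).mul_left _
  have hf : Summable f := (summable_prod_of_nonneg fun p => by positivity).2
    ⟨fun i => (hrow i).summable, by
      simpa only [(hrow _).tsum_eq] using summable_rpow_div_one_sub_rpow hq0 hq1 hx⟩
  rw [(hf.hasSum.prod_fiberwise hrow).tsum_eq]
  exact ((Equiv.prodComm ℕ ℕ).hasSum_iff.2 hf.hasSum).prod_fiberwise hcol

lemma qDigamma_eq (hq0 : 0 < q) (hq1 : q < 1) {x : ℝ} (hx : 0 < x) :
    qDigamma q x = -log (1 - q) + log q * ∑' i : ℕ, q ^ (x + i) / (1 - q ^ (x + i)) := by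
  rw [qDigamma, (hasSum_rpow_div_one_sub_pow hq0 hq1 hx).tsum_eq]

lemma qDigamma_strictMonoOn (hq0 : 0 < q) (hq1 : q < 1) : StrictMonoOn (qDigamma q) (Ioi 0) := by
  intro x hx y hy hxy
  have hterm (n : ℕ) : q ^ (((n : ℝ) + 1) * y) / (1 - q ^ (n + 1))
      < q ^ (((n : ℝ) + 1) * x) / (1 - q ^ (n + 1)) :=
    div_lt_div_of_pos_right (rpow_lt_rpow_of_exponent_gt hq0 hq1 (by gcongr))
      (sub_pos.2 (pow_lt_one₀ hq0.le hq1 n.succ_ne_zero))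
  have hlt := hasSum_lt (fun n => (hterm n).le) (hterm 0)
    (hasSum_rpow_div_one_sub_pow hq0 hq1 hy) (hasSum_rpow_div_one_sub_pow hq0 hq1 hx)
  rw [qDigamma_eq hq0 hq1 hx, qDigamma_eq hq0 hq1 hy]
  nlinarith [log_neg hq0 hq1]

lemma hasDerivAt_logQGamma (hq0 : 0 < q) (hq1 : q < 1) {x : ℝ} (hx : 0 < x) :
    HasDerivAt (logQGamma q) (qDigamma q x) x := by
  rw [qDigamma_eq hq0 hq1 hx]
  refine (((hasDerivAt_const x _).sub (hasDerivAt_logQPochhammer hq0 hq1 hx)).add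
    (((hasDerivAt_const x 1).sub (hasDerivAt_id x)).const_mul (log (1 - q)))).congr_deriv ?_
  ring

lemma qGamma_strictAntiOn_Ioc_and_strictMonoOn_Ici (hq0 : 0 < q) (hq1 : q < 1) {x₀ : ℝ}
    (hx₀ : 0 < x₀) (hzero : qDigamma q x₀ = 0) :
    StrictAntiOn (qGamma q) (Ioc 0 x₀) ∧ StrictMonoOn (qGamma q) (Ici x₀) := by
  obtain ⟨hanti, hmono⟩ := strictAntiOn_Ioc_and_strictMonoOn_Ici_of_hasDerivAt hx₀
    (fun x hx => hasDerivAt_logQGamma hq0 hq1 hx) (qDigamma_strictMonoOn hq0 hq1) hzero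
  have hexp : EqOn (exp ∘ logQGamma q) (qGamma q) (Ioi 0) :=
    fun x hx => (qGamma_eq_exp_logQGamma hq0 hq1 hx).symm
  exact ⟨(exp_strictMono.comp_strictAntiOn hanti).congr (hexp.mono Ioc_subset_Ioi_self),
    (exp_strictMono.comp_strictMonoOn hmono).congr (hexp.mono (Ici_subset_Ioi.2 hx₀))⟩

end QGamma

/-- Γ_q(x) ≥ Γ_q(x₀) for all x > 0, where x₀ ∈ (1,2) is the zero of ψ_q;
moreover Γ_q is strictly decreasing on (0,x₀) and strictly increasing on (x₀,∞). -/
theorem qGamma_min_at_qDigamma_zero (q : ℝ) (hq0 : 0 < q) (hq1 : q < 1)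
    (x₀ : ℝ) (hx₀ : x₀ ∈ Set.Ioo (1 : ℝ) 2) (hzero : qDigamma q x₀ = 0) :
    (∀ x : ℝ, 0 < x → qGamma q x₀ ≤ qGamma q x) ∧
    StrictAntiOn (qGamma q) (Set.Ioo 0 x₀) ∧
    StrictMonoOn (qGamma q) (Set.Ioi x₀) := by
  have hx₀pos : 0 < x₀ := one_pos.trans hx₀.1
  obtain ⟨hanti, hmono⟩ := QGamma.qGamma_strictAntiOn_Ioc_and_strictMonoOn_Ici hq0 hq1 hx₀pos hzero
  refine ⟨fun x hx => ?_, hanti.mono Ioo_subset_Ioc_self, hmono.mono Ioi_subset_Ici_self⟩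
  rcases le_total x x₀ with h | h
  · exact hanti.antitoneOn ⟨hx, h⟩ ⟨hx₀pos, le_rfl⟩ h
  · exact hmono.monotoneOn self_mem_Ici h h
end

section
/- Let 0<q<1. For any x>1 and any positive integer n, x·ψ_q(x) - (x+n)·ψ_q(x+n) < log(Γ_q(x)/Γ_q(x+n)) < (x+n)·ψ_q(x+n) - x·ψ_q(x). -/
/-!
Since `Γ_q(y + 1) = [y]_q Γ_q(y)`, the middle term is `-∑_{k<n} log [x+k]_q`, and the outer terms
telescope into sums of `D(y) = (y+1) ψ_q(y+1) - y ψ_q(y)` at `y = x + k`. For `y ≥ 1` we have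
`[y]_q ≥ 1`, so both bounds follow from `0 ≤ log [y]_q < D(y)`. Expanding
`-log (1 - q^y) = ∑_m q^{my}/m`, the difference `D(y) - log [y]_q` is a series whose `m`-th term is
`q^{my}/m · (1 - t + log t · ((y+1) t - y)) / (1 - t)` with `t = q^m`, which is positive because
`t log t > t - 1` on `(0, 1)`.
-/

open Real

lemma one_sub_add_log_mul_pos {t y : ℝ} (ht0 : 0 < t) (ht1 : t < 1) (hy : 0 ≤ y) :
    0 < 1 - t + log t * ((y + 1) * t - y) := by
  have hlog : log t < 0 := log_neg ht0 ht1
  have hinv : -log t < t⁻¹ - 1 := by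
    simpa [log_inv] using log_lt_sub_one_of_pos (inv_pos.mpr ht0) (by simp [ht1.ne])
  have hmain : 0 < 1 - t + t * log t := by
    have := mul_lt_mul_of_pos_left hinv ht0
    rw [mul_sub, mul_inv_cancel₀ ht0.ne'] at this
    linarith
  have hextra : 0 ≤ y * (1 - t) * -log t := by
    have : 0 ≤ 1 - t := by linarith
    have : 0 ≤ -log t := by linarith
    positivity
  linarith [show 1 - t + log t * ((y + 1) * t - y) = (1 - t + t * log t) + y * (1 - t) * -log t by
    ring]

section

variable {q : ℝ}

lemma summable_rpow_add_nat (hq0 : 0 < q) (hq1 : q < 1) (x : ℝ) :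
    Summable fun i : ℕ => q ^ (x + i) := by
  simp_rw [rpow_add hq0, rpow_natCast]
  exact (summable_geometric_of_lt_one hq0.le hq1).mul_left _

lemma multipliable_one_sub_rpow_add_nat (hq0 : 0 < q) (hq1 : q < 1) (x : ℝ) :
    Multipliable fun i : ℕ => 1 - q ^ (x + i) := by
  simpa only [sub_eq_add_neg] using
    Real.multipliable_one_add_of_summable (summable_rpow_add_nat hq0 hq1 x).neg

lemma one_sub_rpow_pos (hq0 : 0 < q) (hq1 : q < 1) {x : ℝ} (hx : 0 < x) : 0 < 1 - q ^ x :=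
  sub_pos.mpr (rpow_lt_one hq0.le hq1 hx)

lemma tprod_one_sub_rpow_add_nat_pos (hq0 : 0 < q) (hq1 : q < 1) {x : ℝ} (hx : 0 < x) :
    0 < ∏' i : ℕ, (1 - q ^ (x + i)) := by
  have hpos (i : ℕ) : 0 < 1 - q ^ (x + i) := one_sub_rpow_pos hq0 hq1 (by positivity)
  have hlog : Summable fun i : ℕ => log (1 - q ^ (x + i)) := by
    simpa only [sub_eq_add_neg] using
      Real.summable_log_one_add_of_summable (summable_rpow_add_nat hq0 hq1 x).neg
  rw [← Real.rexp_tsum_eq_tprod hpos hlog]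
  exact exp_pos _

lemma tprod_one_sub_rpow_add_nat_eq_mul (hq0 : 0 < q) (hq1 : q < 1) (x : ℝ) :
    ∏' i : ℕ, (1 - q ^ (x + i)) = (1 - q ^ x) * ∏' i : ℕ, (1 - q ^ (x + 1 + i)) := by
  have hshift (i : ℕ) : x + ((i + 1 : ℕ) : ℝ) = x + 1 + i := by push_cast; ring
  rw [tprod_eq_zero_mul' (f := fun i : ℕ => 1 - q ^ (x + i))]
  · simp only [Nat.cast_zero, add_zero, hshift]
  · simpa only [hshift] using multipliable_one_sub_rpow_add_nat hq0 hq1 (x + 1)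

lemma qGamma_pos (hq0 : 0 < q) (hq1 : q < 1) {x : ℝ} (hx : 0 < x) : 0 < qGamma q x := by
  have hqq : ∏' i : ℕ, (1 - q ^ (i + 1)) = ∏' i : ℕ, (1 - q ^ ((1 : ℝ) + i)) := by
    congr! 2 with i
    rw [← rpow_natCast]
    push_cast
    ring_nf
  unfold qGamma
  rw [hqq]
  have := tprod_one_sub_rpow_add_nat_pos hq0 hq1 one_pos
  have := tprod_one_sub_rpow_add_nat_pos hq0 hq1 hx
  have : 0 < 1 - q := by linarith
  positivity

lemma qBracket_pos (hq0 : 0 < q) (hq1 : q < 1) {x : ℝ} (hx : 0 < x) : 0 < qBracket q x :=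
  div_pos (one_sub_rpow_pos hq0 hq1 hx) (by linarith)

lemma one_le_qBracket (hq0 : 0 < q) (hq1 : q < 1) {x : ℝ} (hx : 1 ≤ x) : 1 ≤ qBracket q x := by
  have hq : q ^ x ≤ q := by
    simpa using rpow_le_rpow_of_exponent_ge hq0 hq1.le hx
  rw [qBracket, one_le_div (by linarith)]
  linarith

lemma qGamma_add_one (hq0 : 0 < q) (hq1 : q < 1) {x : ℝ} (hx : 0 < x) :
    qGamma q (x + 1) = qBracket q x * qGamma q x := by
  have h1q : 0 < 1 - q := by linarith
  have hqx : 1 - q ^ x ≠ 0 := (one_sub_rpow_pos hq0 hq1 hx).ne'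
  have hpow : (1 - q) ^ (1 - x) = (1 - q) * (1 - q) ^ (1 - (x + 1)) := by
    rw [show 1 - x = 1 + (1 - (x + 1)) by ring, rpow_add h1q, rpow_one]
  unfold qGamma qBracket
  rw [tprod_one_sub_rpow_add_nat_eq_mul hq0 hq1 x, hpow]
  field_simp

lemma qGamma_add_nat (hq0 : 0 < q) (hq1 : q < 1) {x : ℝ} (hx : 0 < x) (n : ℕ) :
    qGamma q (x + n) = (∏ k ∈ Finset.range n, qBracket q (x + k)) * qGamma q x := by
  induction n with
  | zero => simp
  | succ n ih =>
    rw [Nat.cast_succ, ← add_assoc, qGamma_add_one hq0 hq1 (by positivity), ih,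
      Finset.prod_range_succ]
    ring

lemma log_qGamma_div_qGamma_add_nat (hq0 : 0 < q) (hq1 : q < 1) {x : ℝ} (hx : 0 < x) (n : ℕ) :
    log (qGamma q x / qGamma q (x + n)) = -∑ k ∈ Finset.range n, log (qBracket q (x + k)) := by
  have hprod : ∀ k ∈ Finset.range n, qBracket q (x + k) ≠ 0 :=
    fun k _ => (qBracket_pos hq0 hq1 (by positivity)).ne'
  rw [qGamma_add_nat hq0 hq1 hx, div_mul_cancel_right₀ (qGamma_pos hq0 hq1 hx).ne', log_inv,
    log_prod hprod]

lemma rpow_natCast_add_one_mul (hq : 0 ≤ q) (n : ℕ) (y : ℝ) :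
    q ^ (((n : ℝ) + 1) * y) = (q ^ y) ^ (n + 1) := by
  rw [mul_comm, rpow_mul hq, ← Nat.cast_succ, rpow_natCast]

lemma summable_qDigamma_series (hq0 : 0 < q) (hq1 : q < 1) {y : ℝ} (hy : 0 < y) :
    Summable fun n : ℕ => q ^ (((n : ℝ) + 1) * y) / (1 - q ^ (n + 1)) := by
  have hqy0 : 0 ≤ q ^ y := (rpow_pos_of_pos hq0 y).le
  have hgeo : Summable fun n : ℕ => (q ^ y) ^ (n + 1) / (1 - q) :=
    ((summable_nat_add_iff 1).mpr
      (summable_geometric_of_lt_one hqy0 (rpow_lt_one hq0.le hq1 hy))).div_const _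
  refine hgeo.of_nonneg_of_le (fun n => ?_) (fun n => ?_)
  all_goals
    have hqn : q ^ (n + 1) ≤ q := pow_le_of_le_one hq0.le hq1.le n.succ_ne_zero
    rw [rpow_natCast_add_one_mul hq0.le]
  · exact div_nonneg (by positivity) (by linarith)
  · gcongr

lemma qDigamma_step_term_pos (hq0 : 0 < q) (hq1 : q < 1) {y : ℝ} (hy : 0 ≤ y) (n : ℕ) :
    0 < (q ^ y) ^ (n + 1) / ((n : ℝ) + 1) +
      log q * ((y + 1) * (q ^ (((n : ℝ) + 1) * (y + 1)) / (1 - q ^ (n + 1))) -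
        y * (q ^ (((n : ℝ) + 1) * y) / (1 - q ^ (n + 1)))) := by
  set t := q ^ (n + 1) with ht
  have ht0 : 0 < t := pow_pos hq0 _
  have ht1 : t < 1 := pow_lt_one₀ hq0.le hq1 n.succ_ne_zero
  have hlog : log q = log t / ((n : ℝ) + 1) := by
    rw [ht, log_pow]; push_cast; field_simp
  rw [rpow_natCast_add_one_mul hq0.le, rpow_natCast_add_one_mul hq0.le, rpow_add_one hq0.ne',
    mul_pow, ← ht, hlog]
  have h1t : 0 < 1 - t := by linarith
  have key := one_sub_add_log_mul_pos ht0 ht1 hy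
  have hrw : (q ^ y) ^ (n + 1) / ((n : ℝ) + 1) +
      log t / ((n : ℝ) + 1) * ((y + 1) * ((q ^ y) ^ (n + 1) * t / (1 - t)) -
        y * ((q ^ y) ^ (n + 1) / (1 - t))) =
      (q ^ y) ^ (n + 1) * (1 - t + log t * ((y + 1) * t - y)) / (((n : ℝ) + 1) * (1 - t)) := by
    field_simp
  rw [hrw]
  positivity

theorem log_qBracket_lt_sub_mul_qDigamma (hq0 : 0 < q) (hq1 : q < 1) {y : ℝ} (hy : 0 < y) :
    log (qBracket q y) < (y + 1) * qDigamma q (y + 1) - y * qDigamma q y := by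
  have hqy : |q ^ y| < 1 := by
    rw [abs_of_pos (rpow_pos_of_pos hq0 y)]; exact rpow_lt_one hq0.le hq1 hy
  have hS₀ := (summable_qDigamma_series hq0 hq1 hy).hasSum
  have hS₁ := (summable_qDigamma_series hq0 hq1 (by linarith : 0 < y + 1)).hasSum
  have H := (hasSum_pow_div_log_of_abs_lt_one hqy).add
    (((hS₁.mul_left (y + 1)).sub (hS₀.mul_left y)).mul_left (log q))
  have hpos := H.summable.tsum_pos (fun n => (qDigamma_step_term_pos hq0 hq1 hy.le n).le) 0
    (qDigamma_step_term_pos hq0 hq1 hy.le 0)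
  rw [H.tsum_eq] at hpos
  rw [qBracket, log_div (one_sub_rpow_pos hq0 hq1 hy).ne' (by linarith), qDigamma, qDigamma]
  linarith

end

/-- for x > 1 and n ≥ 1,
x ψ_q(x) - (x+n) ψ_q(x+n) < log(Γ_q(x)/Γ_q(x+n)) < (x+n) ψ_q(x+n) - x ψ_q(x). -/
theorem log_qGamma_ratio_bounds (q : ℝ) (hq0 : 0 < q) (hq1 : q < 1)
    (x : ℝ) (hx : 1 < x) (n : ℕ) (hn : 0 < n) :
    x * qDigamma q x - (x + n) * qDigamma q (x + n)
        < Real.log (qGamma q x / qGamma q (x + n)) ∧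
    Real.log (qGamma q x / qGamma q (x + n))
        < (x + n) * qDigamma q (x + n) - x * qDigamma q x := by
  have hx0 : 0 < x := by linarith
  set f : ℕ → ℝ := fun k => (x + k) * qDigamma q (x + k)
  have htelescope : (x + n) * qDigamma q (x + n) - x * qDigamma q x =
      ∑ k ∈ Finset.range n, (f (k + 1) - f k) := by
    rw [Finset.sum_range_sub]
    simp [f]
  have hstep (k : ℕ) : log (qBracket q (x + k)) < f (k + 1) - f k := by
    simpa [f, add_assoc] using log_qBracket_lt_sub_mul_qDigamma hq0 hq1 (y := x + k) (by positivity)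
  have hlt := Finset.sum_lt_sum_of_nonempty (Finset.nonempty_range_iff.mpr hn.ne')
    fun k _ => hstep k
  have hnonneg : 0 ≤ ∑ k ∈ Finset.range n, log (qBracket q (x + k)) :=
    Finset.sum_nonneg fun k _ =>
      log_nonneg (one_le_qBracket hq0 hq1 (by linarith [(Nat.cast_nonneg k : (0 : ℝ) ≤ k)]))
  rw [log_qGamma_div_qGamma_add_nat hq0 hq1 hx0, htelescope]
  constructor <;> linarith
end

section
/- Let 0<q<1. For all x>0: (a) ψ_q'(x+1) < (-q^x log q)/(1-q^x) < ψ_q'(x), and (b) ψ_q''(x) < (-q^x (log q)²)/(1-q^x)² < ψ_q''(x+1). -/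
/-!
Differentiating the series termwise gives `ψ_q'(x) = ∑ₘ (-log q) q^{mx} ρₘ` and
`-ψ_q''(x) = ∑ₘ (log q)² m q^{mx} ρₘ` with `ρₘ = -log (q^m) / (1 - q^m)`, while `x ↦ x + 1` multiplies
the `m`-th term by `q^m`. The two middle quantities are the same series with `ρₘ` replaced by `1`
(geometric series), so all four inequalities hold termwise, by `q^m ρₘ < 1 < ρₘ`, which is
`1 - t < -log t < (1 - t) / t` for `0 < t < 1`.
-/

open Real

open Set Filter

theorem one_lt_neg_log_div_one_sub {t : ℝ} (ht0 : 0 < t) (ht1 : t < 1) :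
    1 < -log t / (1 - t) := by
  rw [lt_div_iff₀ (by linarith)]
  linarith [log_lt_sub_one_of_pos ht0 ht1.ne]

theorem mul_neg_log_div_one_sub_lt_one {t : ℝ} (ht0 : 0 < t) (ht1 : t < 1) :
    t * (-log t / (1 - t)) < 1 := by
  rw [← mul_div_assoc, div_lt_iff₀ (by linarith)]
  have h := mul_lt_mul_of_pos_left
    (log_lt_sub_one_of_pos (inv_pos.2 ht0) (inv_ne_one.2 ht1.ne)) ht0
  rw [log_inv, mul_sub, mul_inv_cancel₀ ht0.ne'] at h
  linarith

theorem lt_and_lt_of_hasSum_mul {w a b : ℕ → ℝ} {A M B : ℝ} (hw : ∀ n, 0 < w n)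
    (ha : ∀ n, a n < 1) (hb : ∀ n, 1 < b n) (hA : HasSum (fun n => w n * a n) A)
    (hM : HasSum w M) (hB : HasSum (fun n => w n * b n) B) : A < M ∧ M < B := by
  have hlt : ∀ n, w n * a n < w n := fun n => mul_lt_of_lt_one_right (hw n) (ha n)
  have hgt : ∀ n, w n < w n * b n := fun n => lt_mul_of_one_lt_right (hw n) (hb n)
  exact ⟨hasSum_lt (fun n => (hlt n).le) (hlt 0) hA hM,
    hasSum_lt (fun n => (hgt n).le) (hgt 0) hM hB⟩

theorem hasSum_pow_succ {r : ℝ} (hr0 : 0 ≤ r) (hr1 : r < 1) :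
    HasSum (fun n : ℕ => r ^ (n + 1)) (r / (1 - r)) := by
  simpa only [pow_succ', div_eq_mul_inv] using (hasSum_geometric_of_lt_one hr0 hr1).mul_left r

theorem hasSum_succ_mul_pow_succ {r : ℝ} (hr0 : 0 ≤ r) (hr1 : r < 1) :
    HasSum (fun n : ℕ => ((n : ℝ) + 1) * r ^ (n + 1)) (r / (1 - r) ^ 2) := by
  have h := hasSum_coe_mul_geometric_of_norm_lt_one (𝕜 := ℝ) (r := r)
    (by rwa [norm_of_nonneg hr0])
  rw [← hasSum_nat_add_iff' 1] at h
  simp only [Finset.range_one, Finset.sum_singleton, Nat.cast_zero, zero_mul, sub_zero,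
    Nat.cast_succ] at h
  exact h

theorem summable_succ_pow_mul_pow_succ {r : ℝ} (hr0 : 0 ≤ r) (hr1 : r < 1) (k : ℕ) :
    Summable fun n : ℕ => ((n : ℝ) + 1) ^ k * r ^ (n + 1) := by
  have h := summable_pow_mul_geometric_of_norm_lt_one (R := ℝ) k (r := r)
    (by rwa [norm_of_nonneg hr0])
  rw [← summable_nat_add_iff 1] at h
  simp only [Nat.cast_succ] at h
  exact h

section

variable {q : ℝ}

/-- Indexed by `n = m - 1`; `ψ_q^{(k)} = (log q)^(k+1) ∑ₙ qDigammaTerm q k n` for `k ≥ 1`. -/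
noncomputable def qDigammaTerm (q : ℝ) (k n : ℕ) (y : ℝ) : ℝ :=
  ((n : ℝ) + 1) ^ k * q ^ (((n : ℝ) + 1) * y) / (1 - q ^ (n + 1))

theorem rpow_succ_mul_eq_pow (hq0 : 0 < q) (n : ℕ) (y : ℝ) :
    q ^ (((n : ℝ) + 1) * y) = (q ^ y) ^ (n + 1) := by
  rw [mul_comm, rpow_mul hq0.le, ← Nat.cast_succ, rpow_natCast]

theorem hasDerivAt_qDigammaTerm (hq0 : 0 < q) (k n : ℕ) (y : ℝ) :
    HasDerivAt (qDigammaTerm q k n) (log q * qDigammaTerm q (k + 1) n y) y := by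
  have h : HasDerivAt (qDigammaTerm q k n) _ y :=
    (((hasDerivAt_id y).const_mul ((n : ℝ) + 1)).const_rpow hq0).const_mul
      (((n : ℝ) + 1) ^ k) |>.div_const (1 - q ^ (n + 1))
  convert h using 1
  simp only [qDigammaTerm, id]
  ring

theorem norm_qDigammaTerm_le (hq0 : 0 < q) (hq1 : q < 1) (k n : ℕ) {ε y : ℝ} (hεy : ε ≤ y) :
    ‖qDigammaTerm q k n y‖ ≤ ((n : ℝ) + 1) ^ k * (q ^ ε) ^ (n + 1) / (1 - q) := by
  have hpos : 0 < 1 - q ^ (n + 1) := sub_pos.2 (pow_lt_one₀ hq0.le hq1 n.succ_ne_zero)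
  rw [norm_of_nonneg (by unfold qDigammaTerm; positivity), qDigammaTerm, rpow_succ_mul_eq_pow hq0]
  have hpow : (q ^ y) ^ (n + 1) ≤ (q ^ ε) ^ (n + 1) :=
    pow_le_pow_left₀ (rpow_nonneg hq0.le y) (rpow_le_rpow_of_exponent_ge hq0 hq1.le hεy) _
  gcongr
  exact pow_le_of_le_one hq0.le hq1.le n.succ_ne_zero

theorem summable_qDigammaTerm (hq0 : 0 < q) (hq1 : q < 1) (k : ℕ) {y : ℝ} (hy : 0 < y) :
    Summable fun n => qDigammaTerm q k n y :=
  .of_norm_bounded ((summable_succ_pow_mul_pow_succ (rpow_nonneg hq0.le y)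
    (rpow_lt_one hq0.le hq1 hy) k).div_const _) fun n => norm_qDigammaTerm_le hq0 hq1 k n le_rfl

theorem hasDerivAt_tsum_qDigammaTerm (hq0 : 0 < q) (hq1 : q < 1) (k : ℕ) {y : ℝ} (hy : 0 < y) :
    HasDerivAt (fun z => ∑' n, qDigammaTerm q k n z)
      (log q * ∑' n, qDigammaTerm q (k + 1) n y) y := by
  rw [← tsum_mul_left]
  have hbound := ((summable_succ_pow_mul_pow_succ (rpow_nonneg hq0.le (y / 2))
    (rpow_lt_one hq0.le hq1 (half_pos hy)) (k + 1)).div_const (1 - q)).mul_left |log q|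
  refine hasDerivAt_tsum_of_isPreconnected hbound isOpen_Ioi isPreconnected_Ioi
    (fun n z _ => hasDerivAt_qDigammaTerm hq0 k n z) (fun n z hz => ?_) (half_lt_self hy)
    (summable_qDigammaTerm hq0 hq1 k hy) (half_lt_self hy)
  rw [norm_mul, norm_eq_abs]
  exact mul_le_mul_of_nonneg_left (norm_qDigammaTerm_le hq0 hq1 _ n (le_of_lt hz)) (abs_nonneg _)

theorem qDigamma_eq_tsum_qDigammaTerm :
    qDigamma q = fun y => -log (1 - q) + log q * ∑' n, qDigammaTerm q 0 n y := by
  funext y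
  simp only [qDigammaTerm, pow_zero, one_mul]
  rfl

theorem deriv_qDigamma (hq0 : 0 < q) (hq1 : q < 1) {y : ℝ} (hy : 0 < y) :
    deriv (qDigamma q) y = log q * (log q * ∑' n, qDigammaTerm q 1 n y) := by
  rw [qDigamma_eq_tsum_qDigammaTerm]
  exact (((hasDerivAt_tsum_qDigammaTerm hq0 hq1 0 hy).const_mul _).const_add _).deriv

theorem iteratedDeriv_two_qDigamma (hq0 : 0 < q) (hq1 : q < 1) {y : ℝ} (hy : 0 < y) :
    iteratedDeriv 2 (qDigamma q) y = log q * (log q * (log q * ∑' n, qDigammaTerm q 2 n y)) := by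
  have h : deriv (qDigamma q) =ᶠ[nhds y] fun z => log q * (log q * ∑' n, qDigammaTerm q 1 n z) :=
    eventually_of_mem (Ioi_mem_nhds hy) fun z hz => deriv_qDigamma hq0 hq1 hz
  rw [iteratedDeriv_succ, iteratedDeriv_one, h.deriv_eq]
  exact (((hasDerivAt_tsum_qDigammaTerm hq0 hq1 1 hy).const_mul _).const_mul _).deriv

theorem hasSum_deriv_qDigamma (hq0 : 0 < q) (hq1 : q < 1) {y : ℝ} (hy : 0 < y) :
    HasSum (fun n : ℕ => -log q * (q ^ y) ^ (n + 1) * (-log (q ^ (n + 1)) / (1 - q ^ (n + 1))))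
      (deriv (qDigamma q) y) := by
  rw [deriv_qDigamma hq0 hq1 hy, ← mul_assoc]
  refine ((summable_qDigammaTerm hq0 hq1 1 hy).hasSum.mul_left (log q * log q)).congr_fun
    fun n => ?_
  simp only [qDigammaTerm, rpow_succ_mul_eq_pow hq0, log_pow]
  push_cast
  ring

theorem hasSum_neg_iteratedDeriv_two_qDigamma (hq0 : 0 < q) (hq1 : q < 1) {y : ℝ} (hy : 0 < y) :
    HasSum (fun n : ℕ => log q ^ 2 * ((n : ℝ) + 1) * (q ^ y) ^ (n + 1) *
      (-log (q ^ (n + 1)) / (1 - q ^ (n + 1)))) (-iteratedDeriv 2 (qDigamma q) y) := by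
  rw [iteratedDeriv_two_qDigamma hq0 hq1 hy, ← mul_assoc, ← mul_assoc, ← neg_mul]
  refine ((summable_qDigammaTerm hq0 hq1 2 hy).hasSum.mul_left
    (-(log q * log q * log q))).congr_fun fun n => ?_
  simp only [qDigammaTerm, rpow_succ_mul_eq_pow hq0, log_pow]
  push_cast
  ring

theorem deriv_qDigamma_bounds (hq0 : 0 < q) (hq1 : q < 1) {x : ℝ} (hx : 0 < x) :
    deriv (qDigamma q) (x + 1) < -q ^ x * log q / (1 - q ^ x) ∧
      -q ^ x * log q / (1 - q ^ x) < deriv (qDigamma q) x := by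
  have hs0 : 0 < q ^ x := rpow_pos_of_pos hq0 x
  have hs1 : q ^ x < 1 := rpow_lt_one hq0.le hq1 hx
  have ht0 (n : ℕ) : 0 < q ^ (n + 1) := pow_pos hq0 _
  have ht1 (n : ℕ) : q ^ (n + 1) < 1 := pow_lt_one₀ hq0.le hq1 n.succ_ne_zero
  refine lt_and_lt_of_hasSum_mul (w := fun n => -log q * (q ^ x) ^ (n + 1))
    (fun n => mul_pos (neg_pos.2 (log_neg hq0 hq1)) (pow_pos hs0 _))
    (fun n => mul_neg_log_div_one_sub_lt_one (ht0 n) (ht1 n))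
    (fun n => one_lt_neg_log_div_one_sub (ht0 n) (ht1 n)) ?_ ?_ (hasSum_deriv_qDigamma hq0 hq1 hx)
  · refine (hasSum_deriv_qDigamma hq0 hq1 (by linarith : 0 < x + 1)).congr_fun fun n => ?_
    rw [rpow_add_one hq0.ne', mul_pow]
    ring
  · have h := (hasSum_pow_succ hs0.le hs1).mul_left (-log q)
    rwa [show -log q * (q ^ x / (1 - q ^ x)) = -q ^ x * log q / (1 - q ^ x) by ring] at h

theorem iteratedDeriv_two_qDigamma_bounds (hq0 : 0 < q) (hq1 : q < 1) {x : ℝ} (hx : 0 < x) :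
    iteratedDeriv 2 (qDigamma q) x < -q ^ x * log q ^ 2 / (1 - q ^ x) ^ 2 ∧
      -q ^ x * log q ^ 2 / (1 - q ^ x) ^ 2 < iteratedDeriv 2 (qDigamma q) (x + 1) := by
  have hs0 : 0 < q ^ x := rpow_pos_of_pos hq0 x
  have hs1 : q ^ x < 1 := rpow_lt_one hq0.le hq1 hx
  have ht0 (n : ℕ) : 0 < q ^ (n + 1) := pow_pos hq0 _
  have ht1 (n : ℕ) : q ^ (n + 1) < 1 := pow_lt_one₀ hq0.le hq1 n.succ_ne_zero
  rw [← neg_lt_neg_iff (b := iteratedDeriv 2 (qDigamma q) x),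
    ← neg_lt_neg_iff (a := iteratedDeriv 2 (qDigamma q) (x + 1)), and_comm]
  refine lt_and_lt_of_hasSum_mul (w := fun n => log q ^ 2 * ((n : ℝ) + 1) * (q ^ x) ^ (n + 1))
    (fun n => by have := (log_neg hq0 hq1).ne; positivity)
    (fun n => mul_neg_log_div_one_sub_lt_one (ht0 n) (ht1 n))
    (fun n => one_lt_neg_log_div_one_sub (ht0 n) (ht1 n)) ?_ ?_
    (hasSum_neg_iteratedDeriv_two_qDigamma hq0 hq1 hx)
  · refine (hasSum_neg_iteratedDeriv_two_qDigamma hq0 hq1 (by linarith : 0 < x + 1)).congr_fun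
      fun n => ?_
    rw [rpow_add_one hq0.ne', mul_pow]
    ring
  · have h := (hasSum_succ_mul_pow_succ hs0.le hs1).mul_left (log q ^ 2)
    rw [show log q ^ 2 * (q ^ x / (1 - q ^ x) ^ 2) = -(-q ^ x * log q ^ 2 / (1 - q ^ x) ^ 2)
      by ring] at h
    exact h.congr_fun fun n => by ring

end

/-- bounds relating ψ_q', ψ_q'' at x and x+1. -/
theorem qDigamma_deriv_bounds (q : ℝ) (hq0 : 0 < q) (hq1 : q < 1)
    (x : ℝ) (hx : 0 < x) :
    (deriv (qDigamma q) (x + 1) < -q ^ x * Real.log q / (1 - q ^ x) ∧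
     -q ^ x * Real.log q / (1 - q ^ x) < deriv (qDigamma q) x) ∧
    (iteratedDeriv 2 (qDigamma q) x < -q ^ x * (Real.log q) ^ 2 / (1 - q ^ x) ^ 2 ∧
     -q ^ x * (Real.log q) ^ 2 / (1 - q ^ x) ^ 2 < iteratedDeriv 2 (qDigamma q) (x + 1)) :=
  ⟨deriv_qDigamma_bounds hq0 hq1 hx, iteratedDeriv_two_qDigamma_bounds hq0 hq1 hx⟩
end

section
/- Let 0<q<1. For every x>0, e^{-γ_q} < (Γ_q(x+1))^{1/x} < 1/(1-q), where γ_q = -ψ_q(1) is the q-analogue of the Euler–Mascheroni constant. -/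
open Real

/-- The q-analogue of the Euler–Mascheroni constant: γ_q = -ψ_q(1). -/
noncomputable def qEulerMascheroni (q : ℝ) : ℝ := -qDigamma q 1

/-!
With `L = logQPochhammer q` we have
`log Γ_q(x+1) = L(q) - L(q^{x+1}) - x log (1-q)`. The upper bound is `L(q) < L(q^{x+1})`,
i.e. `L` is decreasing. For the lower bound, `-x γ_q = -x log (1-q) + log (q^x) ∑ b/(1-b)` with
`b = q^{i+1}`, and termwise `log (1 - b) - log (1 - b u) > (b/(1-b)) log u` for `u = q^x`: this is
`log t < t - 1` at `t = (1-bu)/(1-b)` followed by `1 - u ≤ -log u`.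
-/

/-- For `a < 1` this is the logarithm of the `q`-Pochhammer symbol `(a;q)_∞`. -/
noncomputable def logQPochhammer (q a : ℝ) : ℝ := ∑' i : ℕ, log (1 - a * q ^ i)

lemma log_mul_div_one_sub_lt_log_one_sub_sub_log {b u : ℝ} (hb0 : 0 < b) (hb1 : b < 1)
    (hu0 : 0 < u) (hu1 : u < 1) :
    log u * (b / (1 - b)) < log (1 - b) - log (1 - b * u) := by
  have h1b : 0 < 1 - b := by linarith
  have hbu : b * u < b := mul_lt_of_lt_one_right hb0 hu1
  have hratio : 1 < (1 - b * u) / (1 - b) := (one_lt_div h1b).mpr (by linarith)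
  calc log u * (b / (1 - b)) ≤ (u - 1) * (b / (1 - b)) := by
        gcongr
        exact log_le_sub_one_of_pos hu0
    _ = -((1 - b * u) / (1 - b) - 1) := by field_simp; ring
    _ < -log ((1 - b * u) / (1 - b)) := neg_lt_neg (log_lt_sub_one_of_pos (by linarith) hratio.ne')
    _ = log (1 - b) - log (1 - b * u) := by
        rw [log_div (by linarith) h1b.ne']
        ring

section QPochhammer

variable {q a u : ℝ}

lemma summable_log_one_sub_mul_pow (a : ℝ) (hq0 : 0 ≤ q) (hq1 : q < 1) :
    Summable fun i : ℕ => log (1 - a * q ^ i) := by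
  simpa only [sub_eq_add_neg] using
    summable_log_one_add_of_summable ((summable_geometric_of_lt_one hq0 hq1).mul_left a).neg

lemma one_sub_mul_pow_pos (hq0 : 0 ≤ q) (hq1 : q ≤ 1) (ha : a < 1) (i : ℕ) :
    0 < 1 - a * q ^ i := by
  have hpow : q ^ i ≤ 1 := pow_le_one₀ hq0 hq1
  rcases le_or_gt a 0 with ha0 | ha0
  · nlinarith [pow_nonneg hq0 i]
  · nlinarith

lemma tprod_one_sub_mul_pow (hq0 : 0 ≤ q) (hq1 : q < 1) (ha : a < 1) :
    ∏' i : ℕ, (1 - a * q ^ i) = exp (logQPochhammer q a) :=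
  (rexp_tsum_eq_tprod (one_sub_mul_pow_pos hq0 hq1.le ha)
    (summable_log_one_sub_mul_pow a hq0 hq1)).symm

lemma logQPochhammer_strictAntiOn (hq0 : 0 < q) (hq1 : q < 1) :
    StrictAntiOn (logQPochhammer q) (Set.Iio 1) := by
  intro a _ b hb hab
  have hterm (i : ℕ) : log (1 - b * q ^ i) < log (1 - a * q ^ i) := by
    have hpow := pow_pos hq0 i
    exact log_lt_log (one_sub_mul_pow_pos hq0.le hq1.le hb i) (by nlinarith)
  exact Summable.tsum_lt_tsum (fun i => (hterm i).le) (hterm 0)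
    (summable_log_one_sub_mul_pow b hq0.le hq1) (summable_log_one_sub_mul_pow a hq0.le hq1)

lemma log_mul_tsum_lt_logQPochhammer_sub (hq0 : 0 < q) (hq1 : q < 1) (ha0 : 0 < a) (ha1 : a < 1)
    (hu0 : 0 < u) (hu1 : u < 1) :
    log u * ∑' i : ℕ, a * q ^ i / (1 - a * q ^ i) <
      logQPochhammer q a - logQPochhammer q (a * u) := by
  have hb0 (i : ℕ) : 0 < a * q ^ i := by positivity
  have hb1 (i : ℕ) : a * q ^ i < 1 := by linarith [one_sub_mul_pow_pos hq0.le hq1.le ha1 i]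
  have hterm (i : ℕ) := log_mul_div_one_sub_lt_log_one_sub_sub_log (hb0 i) (hb1 i) hu0 hu1
  have hsummable : Summable fun i : ℕ => a * q ^ i / (1 - a * q ^ i) := by
    refine .of_nonneg_of_le (fun i => div_nonneg (hb0 i).le (by linarith [hb1 i])) (fun i => ?_)
      (((summable_geometric_of_lt_one hq0.le hq1).mul_left a).div_const (1 - a))
    have hpow : q ^ i ≤ 1 := pow_le_one₀ hq0.le hq1.le
    exact div_le_div_of_nonneg_left (hb0 i).le (by linarith) (by nlinarith)
  have hA := summable_log_one_sub_mul_pow a hq0.le hq1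
  have hB : Summable fun i : ℕ => log (1 - a * q ^ i * u) := by
    simpa only [mul_right_comm a u] using summable_log_one_sub_mul_pow (a * u) hq0.le hq1
  have hL : logQPochhammer q (a * u) = ∑' i : ℕ, log (1 - a * q ^ i * u) := by
    simp only [logQPochhammer, mul_right_comm a u]
  rw [logQPochhammer, hL, ← hA.tsum_sub hB, ← tsum_mul_left]
  exact Summable.tsum_lt_tsum (fun i => (hterm i).le) (hterm 0) (hsummable.mul_left _) (hA.sub hB)

end QPochhammer

lemma qGamma_eq_exp {q x : ℝ} (hq0 : 0 < q) (hq1 : q < 1) (hx : 0 < x) :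
    qGamma q x =
      exp (logQPochhammer q q - logQPochhammer q (q ^ x) + log (1 - q) * (1 - x)) := by
  have hnum : ∏' i : ℕ, (1 - q ^ (i + 1)) = exp (logQPochhammer q q) := by
    simp only [pow_succ']
    exact tprod_one_sub_mul_pow hq0.le hq1 hq1
  have hden : ∏' i : ℕ, (1 - q ^ (x + (i : ℝ))) = exp (logQPochhammer q (q ^ x)) := by
    simp only [rpow_add hq0, rpow_natCast]
    exact tprod_one_sub_mul_pow hq0.le hq1 (rpow_lt_one hq0.le hq1 hx)
  rw [qGamma, hnum, hden, ← exp_sub, rpow_def_of_pos (by linarith : 0 < 1 - q), ← exp_add]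

lemma qEulerMascheroni_eq (q : ℝ) :
    qEulerMascheroni q = log (1 - q) - log q * ∑' i : ℕ, q * q ^ i / (1 - q * q ^ i) := by
  have hterm (n : ℕ) : q ^ (((n : ℝ) + 1) * 1) = q * q ^ n := by
    rw [mul_one, ← Nat.cast_succ, rpow_natCast, pow_succ']
  simp only [qEulerMascheroni, qDigamma, hterm, ← pow_succ']
  ring

/-- e^{-γ_q} < (Γ_q(x+1))^{1/x} < 1/(1-q) for all x > 0. -/
theorem qGamma_root_bounds (q : ℝ) (hq0 : 0 < q) (hq1 : q < 1) (x : ℝ) (hx : 0 < x) :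
    Real.exp (-qEulerMascheroni q) < qGamma q (x + 1) ^ (1 / x) ∧
    qGamma q (x + 1) ^ (1 / x) < 1 / (1 - q) := by
  have h1q : 0 < 1 - q := by linarith
  have hu0 : 0 < q ^ x := rpow_pos_of_pos hq0 x
  have hu1 : q ^ x < 1 := rpow_lt_one hq0.le hq1 hx
  rw [qGamma_eq_exp hq0 hq1 (by linarith), rpow_add_one hq0.ne', ← exp_mul,
    show 1 - (x + 1) = -x by ring, mul_comm (q ^ x)]
  constructor
  · have hkey := log_mul_tsum_lt_logQPochhammer_sub hq0 hq1 hq0 hq1 hu0 hu1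
    rw [log_rpow hq0] at hkey
    rw [exp_lt_exp, qEulerMascheroni_eq, mul_one_div, lt_div_iff₀ hx]
    linarith
  · have hlt : q * q ^ x < q := mul_lt_of_lt_one_right hq0 hu1
    have hmono := logQPochhammer_strictAntiOn hq0 hq1 (hlt.trans hq1) hq1 hlt
    rw [← exp_log (one_div_pos.2 h1q), exp_lt_exp, mul_one_div, div_lt_iff₀ hx, one_div, log_inv]
    linarith
end

section
/- Let 0<q<1. The function F(x) = (Γ_q(x+1))^{1/x} / x is strictly decreasing and strictly log-convex on (0,∞); that is, x ↦ (1/x)·log Γ_q(x+1) - log x is strictly decreasing and strictly convex on (0,∞). -/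
open Real

open Real Filter Set


lemma lazarevic {t : ℝ} (ht : 0 ≤ t) : t ^ 3 * Real.cosh t ≤ Real.sinh t ^ 3 := by
  set φ : ℝ → ℝ := fun s => Real.sinh s * Real.cosh s ^ (-(1/3) : ℝ) - s with hφ
  have hder : ∀ s : ℝ, HasDerivAt φ
      (Real.cosh s * Real.cosh s ^ (-(1/3) : ℝ)
        + Real.sinh s * (Real.sinh s * (-(1/3)) * Real.cosh s ^ ((-(1/3) : ℝ) - 1)) - 1) s := by
    intro s
    have h1 : HasDerivAt (fun y => Real.cosh y ^ (-(1/3) : ℝ))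
        (Real.sinh s * (-(1/3)) * Real.cosh s ^ ((-(1/3) : ℝ) - 1)) s :=
      (Real.hasDerivAt_cosh s).rpow_const (Or.inl (Real.cosh_pos s).ne')
    exact ((Real.hasDerivAt_sinh s).mul h1).sub (hasDerivAt_id s)
  have hdnn : ∀ s : ℝ, 0 ≤ Real.cosh s * Real.cosh s ^ (-(1/3) : ℝ)
        + Real.sinh s * (Real.sinh s * (-(1/3)) * Real.cosh s ^ ((-(1/3) : ℝ) - 1)) - 1 := by
    intro s
    set C := Real.cosh s with hC
    have hCpos : 0 < C := Real.cosh_pos s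
    set A := C ^ ((1:ℝ)/3) with hA
    have hApos : 0 < A := Real.rpow_pos_of_pos hCpos _
    have hA3 : A ^ 3 = C := by
      rw [hA, ← Real.rpow_natCast (C ^ ((1:ℝ)/3)) 3, ← Real.rpow_mul hCpos.le]
      norm_num
    have hA1 : 1 ≤ A := by
      rw [hA]
      apply Real.one_le_rpow (Real.one_le_cosh s) (by norm_num)
    have hneg : C ^ (-(1/3) : ℝ) = A⁻¹ := by
      rw [hA, ← Real.rpow_neg hCpos.le]
    have hneg4 : C ^ ((-(1/3) : ℝ) - 1) = (A^4)⁻¹ := by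
      rw [hA, ← Real.rpow_natCast (C ^ ((1:ℝ)/3)) 4, ← Real.rpow_mul hCpos.le,
        ← Real.rpow_neg hCpos.le]
      norm_num
    have hS : Real.sinh s * Real.sinh s = C^2 - 1 := by
      have := Real.cosh_sq s
      nlinarith [this]
    rw [hneg, hneg4]
    have key : 2 * A^6 + 1 - 3 * A^4 ≥ 0 := by nlinarith [sq_nonneg (A^2 - 1), sq_nonneg A, hA1]
    have hC2 : C = A^3 := hA3.symm
    rw [hC2] at hS ⊢
    have hA4 : (0:ℝ) < A^4 := by positivity
    have expand : A ^ 3 * A⁻¹ + Real.sinh s * (Real.sinh s * (-(1 / 3)) * (A ^ 4)⁻¹) - 1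
        = (2 * A^6 + 1 - 3*A^4) / (3 * A^4) := by
      field_simp
      nlinarith [hS]
    rw [expand]
    positivity
  have hmono : Monotone φ := by
    apply monotone_of_deriv_nonneg
    · exact fun s => (hder s).differentiableAt
    · intro s
      rw [(hder s).deriv]
      exact hdnn s
  have h0 : φ 0 = 0 := by simp [hφ]
  have hge : t ≤ Real.sinh t * Real.cosh t ^ (-(1/3) : ℝ) := by
    have h2 := hmono ht
    rw [h0, hφ] at h2
    simpa using h2
  have hsinh : 0 ≤ Real.sinh t := by
    rw [← Real.sinh_zero]
    exact Real.sinh_le_sinh.mpr ht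
  have hcube := pow_le_pow_left₀ ht hge 3
  have hmul : (Real.sinh t * Real.cosh t ^ (-(1/3) : ℝ))^3 = Real.sinh t ^ 3 / Real.cosh t := by
    rw [mul_pow, ← Real.rpow_natCast (Real.cosh t ^ (-(1/3):ℝ)) 3, ← Real.rpow_mul (Real.cosh_pos t).le]
    norm_num
    rw [Real.rpow_neg_one]
    ring
  rw [hmul] at hcube
  rw [← le_div_iff₀ (Real.cosh_pos t)] at *
  calc t^3 ≤ Real.sinh t ^3 / Real.cosh t := hcube


lemma coreA' {s : ℝ} (hs : 0 < s) : s ^ 2 * Real.exp (-s) ≤ (1 - Real.exp (-s)) ^ 2 := by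
  have ht : 0 < s / 2 := by linarith
  have h1 : s / 2 ≤ Real.sinh (s / 2) := (Real.self_lt_sinh_iff.mpr ht).le
  rw [Real.sinh_eq] at h1
  have hE : Real.exp (s/2) * Real.exp (-(s/2)) = 1 := by
    rw [← Real.exp_add]; simp
  have he : 0 < Real.exp (-(s/2)) := Real.exp_pos _
  have h2 : s * Real.exp (-(s/2)) ≤ 1 - Real.exp (-s) := by
    have hs2 : Real.exp (-s) = Real.exp (-(s/2)) * Real.exp (-(s/2)) := by
      rw [← Real.exp_add]; ring_nf
    nlinarith [h1, he, hE]
  have h3 : (s * Real.exp (-(s/2)))^2 ≤ (1 - Real.exp (-s))^2 := by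
    apply pow_le_pow_left₀ (by positivity) h2
  have hs2 : Real.exp (-s) = Real.exp (-(s/2)) * Real.exp (-(s/2)) := by
    rw [← Real.exp_add]; ring_nf
  nlinarith [h3]

lemma coreB' {s : ℝ} (hs : 0 < s) :
    s ^ 3 * Real.exp (-s) * (1 + Real.exp (-s)) ≤ 2 * (1 - Real.exp (-s)) ^ 3 := by
  have ht : 0 < s / 2 := by linarith
  have hlaz := lazarevic ht.le
  rw [Real.sinh_eq, Real.cosh_eq] at hlaz
  set E := Real.exp (s/2) with hE'
  set e := Real.exp (-(s/2)) with he'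
  have hE : E * e = 1 := by rw [hE', he', ← Real.exp_add]; simp
  have he : 0 < e := Real.exp_pos _
  have hs2 : Real.exp (-s) = e * e := by rw [he', ← Real.exp_add]; ring_nf
  rw [hs2]
  have h2 : 1 - e * e = e * (E - e) := by rw [mul_sub]; rw [mul_comm e E, hE]
  have h3 : 1 + e * e = e * (E + e) := by rw [mul_add]; rw [mul_comm e E, hE]
  rw [h2, h3]
  -- goal: s^3 * (e*e) * (e*(E+e)) ≤ 2 * (e*(E-e))^3
  have hEe : 0 ≤ E - e := by
    rw [sub_nonneg, hE', he']
    exact Real.exp_le_exp.mpr (by linarith)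
  nlinarith [hlaz, pow_pos he 3, mul_le_mul_of_nonneg_left hlaz (le_of_lt (pow_pos he 3)),
    sq_nonneg s, he]

section A

noncomputable def qgT (q x : ℝ) : ℝ := ∑' i : ℕ, Real.log (1 - q ^ (x + 1 + (i:ℝ)))
noncomputable def qgT1 (q x : ℝ) : ℝ :=
  ∑' i : ℕ, -Real.log q * q ^ (x + 1 + (i:ℝ)) / (1 - q ^ (x + 1 + (i:ℝ)))
noncomputable def qgT2 (q x : ℝ) : ℝ :=
  ∑' i : ℕ, -(Real.log q ^ 2 * q ^ (x + 1 + (i:ℝ)) / (1 - q ^ (x + 1 + (i:ℝ))) ^ 2)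
noncomputable def qgT3 (q x : ℝ) : ℝ :=
  ∑' i : ℕ, (-Real.log q) ^ 3 * (q ^ (x + 1 + (i:ℝ)) * (1 + q ^ (x + 1 + (i:ℝ))))
      / (1 - q ^ (x + 1 + (i:ℝ))) ^ 3

section
variable {q : ℝ}

lemma qg_geo_summable (hq0 : 0 < q) (hq1 : q < 1) : Summable (fun i : ℕ => q ^ ((1:ℝ)/2 + (i:ℝ))) := by
  have : (fun i : ℕ => q ^ ((1:ℝ)/2 + (i:ℝ))) = fun i : ℕ => q ^ ((1:ℝ)/2) * q ^ i := by
    funext i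
    rw [Real.rpow_add hq0, Real.rpow_natCast]
  rw [this]
  exact (summable_geometric_of_lt_one hq0.le hq1).mul_left _

lemma qgc_pos (hq0 : 0 < q) (i : ℕ) (x : ℝ) : 0 < q ^ (x + 1 + (i:ℝ)) := Real.rpow_pos_of_pos hq0 _

lemma qgc_le (hq0 : 0 < q) (hq1 : q < 1) {x : ℝ} (hx : -(1/2) < x) (i : ℕ) : q ^ (x + 1 + (i:ℝ)) ≤ q ^ ((1:ℝ)/2 + (i:ℝ)) :=
  Real.rpow_le_rpow_of_exponent_ge hq0 hq1.le (by linarith)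

lemma qgQ2_lt_one (hq0 : 0 < q) (hq1 : q < 1) : q ^ ((1:ℝ)/2) < 1 := Real.rpow_lt_one hq0.le hq1 (by norm_num)

lemma qgc_lt_one (hq0 : 0 < q) (hq1 : q < 1) {x : ℝ} (hx : -(1/2) < x) (i : ℕ) : q ^ (x + 1 + (i:ℝ)) < 1 := by
  calc q ^ (x + 1 + (i:ℝ)) ≤ q ^ ((1:ℝ)/2 + (i:ℝ)) := qgc_le hq0 hq1 hx i
    _ ≤ q ^ ((1:ℝ)/2) := Real.rpow_le_rpow_of_exponent_ge hq0 hq1.le (le_add_of_nonneg_right (Nat.cast_nonneg i))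
    _ < 1 := qgQ2_lt_one hq0 hq1

lemma qg_one_sub_c_lb (hq0 : 0 < q) (hq1 : q < 1) {x : ℝ} (hx : -(1/2) < x) (i : ℕ) :
    1 - q ^ ((1:ℝ)/2) ≤ 1 - q ^ (x + 1 + (i:ℝ)) := by
  have h := (qgc_le hq0 hq1 hx i).trans
    (Real.rpow_le_rpow_of_exponent_ge hq0 hq1.le (le_add_of_nonneg_right (Nat.cast_nonneg i)) :
      q ^ ((1:ℝ)/2 + (i:ℝ)) ≤ q ^ ((1:ℝ)/2))
  linarith

lemma qgQ2_pos (hq0 : 0 < q) (hq1 : q < 1) : 0 < 1 - q ^ ((1:ℝ)/2) := by linarith [qgQ2_lt_one hq0 hq1]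

-- derivative of the basic building block
lemma qg_hasDerivAt_c (hq0 : 0 < q) (i : ℕ) (x : ℝ) :
    HasDerivAt (fun z : ℝ => q ^ (z + 1 + (i:ℝ))) (q ^ (x + 1 + (i:ℝ)) * Real.log q) x := by
  have houter := (Real.hasStrictDerivAt_const_rpow hq0 (x + 1 + (i:ℝ))).hasDerivAt
  have hinner : HasDerivAt (fun z : ℝ => z + 1 + (i:ℝ)) 1 x := by
    simpa using ((hasDerivAt_id x).add_const 1).add_const (i:ℝ)
  have := houter.comp x hinner
  simpa [Function.comp_def] using this

lemma qg_hd_log (hq0 : 0 < q) (hq1 : q < 1) {x : ℝ} (hx : -(1/2) < x) (i : ℕ) :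
    HasDerivAt (fun z : ℝ => Real.log (1 - q ^ (z + 1 + (i:ℝ))))
      (-Real.log q * q ^ (x + 1 + (i:ℝ)) / (1 - q ^ (x + 1 + (i:ℝ)))) x := by
  have hne : 1 - q ^ (x + 1 + (i:ℝ)) ≠ 0 := by
    have := qgc_lt_one hq0 hq1 hx i; linarith
  have h1 : HasDerivAt (fun z : ℝ => 1 - q ^ (z + 1 + (i:ℝ)))
      (-(q ^ (x + 1 + (i:ℝ)) * Real.log q)) x := by
    simpa using (hasDerivAt_const x (1:ℝ)).fun_sub (qg_hasDerivAt_c hq0 i x)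
  have := h1.log hne
  convert this using 1
  ring

lemma qg_hd_t1 (hq0 : 0 < q) (hq1 : q < 1) {x : ℝ} (hx : -(1/2) < x) (i : ℕ) :
    HasDerivAt (fun z : ℝ => -Real.log q * q ^ (z + 1 + (i:ℝ)) / (1 - q ^ (z + 1 + (i:ℝ))))
      (-(Real.log q ^ 2 * q ^ (x + 1 + (i:ℝ)) / (1 - q ^ (x + 1 + (i:ℝ))) ^ 2)) x := by
  have hne : 1 - q ^ (x + 1 + (i:ℝ)) ≠ 0 := by
    have := qgc_lt_one hq0 hq1 hx i; linarith
  have hnum : HasDerivAt (fun z : ℝ => -Real.log q * q ^ (z + 1 + (i:ℝ)))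
      (-Real.log q * (q ^ (x + 1 + (i:ℝ)) * Real.log q)) x := (qg_hasDerivAt_c hq0 i x).const_mul _
  have hden : HasDerivAt (fun z : ℝ => 1 - q ^ (z + 1 + (i:ℝ)))
      (-(q ^ (x + 1 + (i:ℝ)) * Real.log q)) x := by
    simpa using (hasDerivAt_const x (1:ℝ)).fun_sub (qg_hasDerivAt_c hq0 i x)
  have := hnum.fun_div hden hne
  refine this.congr_deriv (Eq.symm ?_)
  field_simp
  ring

lemma qg_hd_t2 (hq0 : 0 < q) (hq1 : q < 1) {x : ℝ} (hx : -(1/2) < x) (i : ℕ) :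
    HasDerivAt (fun z : ℝ => -(Real.log q ^ 2 * q ^ (z + 1 + (i:ℝ)) / (1 - q ^ (z + 1 + (i:ℝ))) ^ 2))
      ((-Real.log q) ^ 3 * (q ^ (x + 1 + (i:ℝ)) * (1 + q ^ (x + 1 + (i:ℝ))))
        / (1 - q ^ (x + 1 + (i:ℝ))) ^ 3) x := by
  have hne : 1 - q ^ (x + 1 + (i:ℝ)) ≠ 0 := by
    have := qgc_lt_one hq0 hq1 hx i; linarith
  have hnum : HasDerivAt (fun z : ℝ => Real.log q ^ 2 * q ^ (z + 1 + (i:ℝ)))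
      (Real.log q ^ 2 * (q ^ (x + 1 + (i:ℝ)) * Real.log q)) x := (qg_hasDerivAt_c hq0 i x).const_mul _
  have hden : HasDerivAt (fun z : ℝ => (1 - q ^ (z + 1 + (i:ℝ))) ^ 2)
      (2 * (1 - q ^ (x + 1 + (i:ℝ))) ^ 1 * -(q ^ (x + 1 + (i:ℝ)) * Real.log q)) x := by
    have h1 : HasDerivAt (fun z : ℝ => 1 - q ^ (z + 1 + (i:ℝ)))
        (-(q ^ (x + 1 + (i:ℝ)) * Real.log q)) x := by
      simpa using (hasDerivAt_const x (1:ℝ)).fun_sub (qg_hasDerivAt_c hq0 i x)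
    simpa using h1.fun_pow 2
  have hdenne : (1 - q ^ (x + 1 + (i:ℝ))) ^ 2 ≠ 0 := pow_ne_zero _ hne
  have := (hnum.fun_div hden hdenne).fun_neg
  refine this.congr_deriv (Eq.symm ?_)
  field_simp
  ring

end


section B
variable {q : ℝ}

lemma qgB1 (hq0 : 0 < q) (hq1 : q < 1) {x : ℝ} (hx : -(1/2) < x) (i : ℕ) :
    ‖-Real.log q * q ^ (x + 1 + (i:ℝ)) / (1 - q ^ (x + 1 + (i:ℝ)))‖
      ≤ -Real.log q / (1 - q ^ ((1:ℝ)/2)) * q ^ ((1:ℝ)/2 + (i:ℝ)) := by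
  have hL : 0 < -Real.log q := by have := Real.log_neg hq0 hq1; linarith
  have hc := qgc_pos hq0 i x
  have hlb := qg_one_sub_c_lb hq0 hq1 hx i
  have hQ2 := qgQ2_pos hq0 hq1
  have hle := qgc_le hq0 hq1 hx i
  have hcc : 0 < 1 - q ^ (x + 1 + (i:ℝ)) := by linarith
  rw [Real.norm_eq_abs, abs_of_nonneg (div_nonneg (mul_nonneg hL.le hc.le) hcc.le)]
  rw [div_le_iff₀ hcc]
  have key : q ^ (x + 1 + (i:ℝ)) * (1 - q ^ ((1:ℝ)/2)) ≤ q ^ ((1:ℝ)/2 + (i:ℝ)) * (1 - q ^ (x + 1 + (i:ℝ))) := by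
    apply mul_le_mul hle (by linarith) (by linarith) (by positivity)
  calc -Real.log q * q ^ (x + 1 + (i:ℝ))
      = -Real.log q / (1 - q ^ ((1:ℝ)/2)) * (q ^ (x + 1 + (i:ℝ)) * (1 - q ^ ((1:ℝ)/2))) := by
        field_simp
    _ ≤ -Real.log q / (1 - q ^ ((1:ℝ)/2)) * (q ^ ((1:ℝ)/2 + (i:ℝ)) * (1 - q ^ (x + 1 + (i:ℝ)))) := by
        apply mul_le_mul_of_nonneg_left key (by positivity)
    _ = -Real.log q / (1 - q ^ ((1:ℝ)/2)) * q ^ ((1:ℝ)/2 + (i:ℝ)) * (1 - q ^ (x + 1 + (i:ℝ))) := by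
        ring

lemma qgB2 (hq0 : 0 < q) (hq1 : q < 1) {x : ℝ} (hx : -(1/2) < x) (i : ℕ) :
    ‖-(Real.log q ^ 2 * q ^ (x + 1 + (i:ℝ)) / (1 - q ^ (x + 1 + (i:ℝ))) ^ 2)‖
      ≤ Real.log q ^ 2 / (1 - q ^ ((1:ℝ)/2)) ^ 2 * q ^ ((1:ℝ)/2 + (i:ℝ)) := by
  have hc := qgc_pos hq0 i x
  have hlb := qg_one_sub_c_lb hq0 hq1 hx i
  have hQ2 := qgQ2_pos hq0 hq1
  have hle := qgc_le hq0 hq1 hx i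
  have hcc : 0 < 1 - q ^ (x + 1 + (i:ℝ)) := by linarith
  rw [norm_neg, Real.norm_eq_abs, abs_of_nonneg (by positivity)]
  rw [div_le_iff₀ (by positivity)]
  have key : q ^ (x + 1 + (i:ℝ)) * (1 - q ^ ((1:ℝ)/2))^2 ≤ q ^ ((1:ℝ)/2 + (i:ℝ)) * (1 - q ^ (x + 1 + (i:ℝ)))^2 := by
    apply mul_le_mul hle (by nlinarith) (by positivity) (by positivity)
  calc Real.log q ^ 2 * q ^ (x + 1 + (i:ℝ))
      = Real.log q ^ 2 / (1 - q ^ ((1:ℝ)/2))^2 * (q ^ (x + 1 + (i:ℝ)) * (1 - q ^ ((1:ℝ)/2))^2) := by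
        field_simp
    _ ≤ Real.log q ^ 2 / (1 - q ^ ((1:ℝ)/2))^2 * (q ^ ((1:ℝ)/2 + (i:ℝ)) * (1 - q ^ (x + 1 + (i:ℝ)))^2) := by
        apply mul_le_mul_of_nonneg_left key (by positivity)
    _ = Real.log q ^ 2 / (1 - q ^ ((1:ℝ)/2)) ^ 2 * q ^ ((1:ℝ)/2 + (i:ℝ)) * (1 - q ^ (x + 1 + (i:ℝ))) ^ 2 := by
        ring

lemma qgB3 (hq0 : 0 < q) (hq1 : q < 1) {x : ℝ} (hx : -(1/2) < x) (i : ℕ) :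
    ‖(-Real.log q) ^ 3 * (q ^ (x + 1 + (i:ℝ)) * (1 + q ^ (x + 1 + (i:ℝ))))
        / (1 - q ^ (x + 1 + (i:ℝ))) ^ 3‖
      ≤ (-Real.log q) ^ 3 * 2 / (1 - q ^ ((1:ℝ)/2)) ^ 3 * q ^ ((1:ℝ)/2 + (i:ℝ)) := by
  have hL : 0 < -Real.log q := by have := Real.log_neg hq0 hq1; linarith
  have hc := qgc_pos hq0 i x
  have hlb := qg_one_sub_c_lb hq0 hq1 hx i
  have hQ2 := qgQ2_pos hq0 hq1
  have hle := qgc_le hq0 hq1 hx i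
  have hlt := qgc_lt_one hq0 hq1 hx i
  have hcc : 0 < 1 - q ^ (x + 1 + (i:ℝ)) := by linarith
  rw [Real.norm_eq_abs, abs_of_nonneg (by positivity)]
  rw [div_le_iff₀ (by positivity)]
  have key : (q ^ (x + 1 + (i:ℝ)) * (1 + q ^ (x + 1 + (i:ℝ)))) * (1 - q ^ ((1:ℝ)/2))^3
      ≤ (2 * q ^ ((1:ℝ)/2 + (i:ℝ))) * (1 - q ^ (x + 1 + (i:ℝ)))^3 := by
    have h1 : q ^ (x + 1 + (i:ℝ)) * (1 + q ^ (x + 1 + (i:ℝ))) ≤ 2 * q ^ ((1:ℝ)/2 + (i:ℝ)) := by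
      nlinarith
    have h2 : (1 - q ^ ((1:ℝ)/2))^3 ≤ (1 - q ^ (x + 1 + (i:ℝ)))^3 := by
      apply pow_le_pow_left₀ (by linarith) hlb
    apply mul_le_mul h1 h2 (by positivity) (by positivity)
  calc (-Real.log q) ^ 3 * (q ^ (x + 1 + (i:ℝ)) * (1 + q ^ (x + 1 + (i:ℝ))))
      = (-Real.log q) ^ 3 / (1 - q ^ ((1:ℝ)/2))^3
          * ((q ^ (x + 1 + (i:ℝ)) * (1 + q ^ (x + 1 + (i:ℝ)))) * (1 - q ^ ((1:ℝ)/2))^3) := by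
        field_simp
    _ ≤ (-Real.log q) ^ 3 / (1 - q ^ ((1:ℝ)/2))^3
          * ((2 * q ^ ((1:ℝ)/2 + (i:ℝ))) * (1 - q ^ (x + 1 + (i:ℝ)))^3) := by
        apply mul_le_mul_of_nonneg_left key (by positivity)
    _ = (-Real.log q) ^ 3 * 2 / (1 - q ^ ((1:ℝ)/2)) ^ 3 * q ^ ((1:ℝ)/2 + (i:ℝ))
          * (1 - q ^ (x + 1 + (i:ℝ))) ^ 3 := by
        ring

lemma qg_log_summable (hq0 : 0 < q) (hq1 : q < 1) {x : ℝ} (hx : -(1/2) < x) :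
    Summable (fun i : ℕ => Real.log (1 - q ^ (x + 1 + (i:ℝ)))) := by
  rw [← summable_abs_iff]
  apply Summable.of_nonneg_of_le (fun i => abs_nonneg _)
    (f := fun i : ℕ => q ^ ((1:ℝ)/2 + (i:ℝ)) / (1 - q ^ ((1:ℝ)/2)))
  · intro i
    have hc := qgc_pos hq0 i x
    have hlt := qgc_lt_one hq0 hq1 hx i
    have hlb := qg_one_sub_c_lb hq0 hq1 hx i
    have hQ2 := qgQ2_pos hq0 hq1
    have hcc : 0 < 1 - q ^ (x + 1 + (i:ℝ)) := by linarith
    have hlog : Real.log (1 - q ^ (x + 1 + (i:ℝ))) ≤ 0 :=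
      Real.log_nonpos (by linarith) (by linarith)
    rw [abs_of_nonpos hlog]
    have h2 : -Real.log (1 - q ^ (x + 1 + (i:ℝ))) = Real.log ((1 - q ^ (x + 1 + (i:ℝ)))⁻¹) := 
      (Real.log_inv _).symm
    rw [h2]
    have h3 := Real.log_le_sub_one_of_pos (x := (1 - q ^ (x + 1 + (i:ℝ)))⁻¹) (by positivity)
    have h4 : (1 - q ^ (x + 1 + (i:ℝ)))⁻¹ - 1 = q ^ (x + 1 + (i:ℝ)) / (1 - q ^ (x + 1 + (i:ℝ))) := by
      field_simp
      ring
    rw [h4] at h3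
    apply h3.trans
    apply div_le_div₀ (by positivity) (qgc_le hq0 hq1 hx i) hQ2 hlb
  · exact (qg_geo_summable hq0 hq1).div_const _

lemma qg_hdT (hq0 : 0 < q) (hq1 : q < 1) {x : ℝ} (hx : x ∈ Set.Ioi (-(1/2):ℝ)) :
    HasDerivAt (qgT q) (qgT1 q x) x := by
  apply hasDerivAt_tsum_of_isPreconnected
    ((qg_geo_summable hq0 hq1).mul_left (-Real.log q / (1 - q ^ ((1:ℝ)/2))))
    isOpen_Ioi (convex_Ioi _).isPreconnected
    (fun i y hy => qg_hd_log hq0 hq1 hy i)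
    (fun i y hy => qgB1 hq0 hq1 hy i)
    (Set.mem_Ioi.mpr (by norm_num : -(1/2:ℝ) < 0))
    (qg_log_summable hq0 hq1 (by norm_num))
    hx

lemma qg_sum1 (hq0 : 0 < q) (hq1 : q < 1) {x : ℝ} (hx : -(1/2) < x) :
    Summable (fun i : ℕ => -Real.log q * q ^ (x + 1 + (i:ℝ)) / (1 - q ^ (x + 1 + (i:ℝ)))) := by
  apply Summable.of_norm
  apply Summable.of_nonneg_of_le (fun i => norm_nonneg _) (fun i => qgB1 hq0 hq1 hx i)
  exact (qg_geo_summable hq0 hq1).mul_left _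

lemma qg_sum2 (hq0 : 0 < q) (hq1 : q < 1) {x : ℝ} (hx : -(1/2) < x) :
    Summable (fun i : ℕ => -(Real.log q ^ 2 * q ^ (x + 1 + (i:ℝ)) / (1 - q ^ (x + 1 + (i:ℝ))) ^ 2)) := by
  apply Summable.of_norm
  apply Summable.of_nonneg_of_le (fun i => norm_nonneg _) (fun i => qgB2 hq0 hq1 hx i)
  exact (qg_geo_summable hq0 hq1).mul_left _

lemma qg_hdT1 (hq0 : 0 < q) (hq1 : q < 1) {x : ℝ} (hx : x ∈ Set.Ioi (-(1/2):ℝ)) :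
    HasDerivAt (qgT1 q) (qgT2 q x) x := by
  apply hasDerivAt_tsum_of_isPreconnected
    ((qg_geo_summable hq0 hq1).mul_left (Real.log q ^ 2 / (1 - q ^ ((1:ℝ)/2)) ^ 2))
    isOpen_Ioi (convex_Ioi _).isPreconnected
    (fun i y hy => qg_hd_t1 hq0 hq1 hy i)
    (fun i y hy => qgB2 hq0 hq1 hy i)
    (Set.mem_Ioi.mpr (by norm_num : -(1/2:ℝ) < 0))
    (qg_sum1 hq0 hq1 (by norm_num))
    hx

lemma qg_hdT2 (hq0 : 0 < q) (hq1 : q < 1) {x : ℝ} (hx : x ∈ Set.Ioi (-(1/2):ℝ)) :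
    HasDerivAt (qgT2 q) (qgT3 q x) x := by
  apply hasDerivAt_tsum_of_isPreconnected
    ((qg_geo_summable hq0 hq1).mul_left ((-Real.log q) ^ 3 * 2 / (1 - q ^ ((1:ℝ)/2)) ^ 3))
    isOpen_Ioi (convex_Ioi _).isPreconnected
    (fun i y hy => qg_hd_t2 hq0 hq1 hy i)
    (fun i y hy => qgB3 hq0 hq1 hy i)
    (Set.mem_Ioi.mpr (by norm_num : -(1/2:ℝ) < 0))
    (qg_sum2 hq0 hq1 (by norm_num))
    hx

end B

end A

section C
variable {q : ℝ}

-- per-term bound A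
lemma qg_perA (hq0 : 0 < q) (hq1 : q < 1) {y : ℝ} (hy : 0 < y) :
    Real.log q ^ 2 * q ^ y / (1 - q ^ y) ^ 2 ≤ 1 / y ^ 2 := by
  have hL : Real.log q < 0 := Real.log_neg hq0 hq1
  set s : ℝ := -Real.log q * y with hs
  have hspos : 0 < s := by nlinarith
  have hcexp : q ^ y = Real.exp (-s) := by
    rw [Real.rpow_def_of_pos hq0, hs]; ring_nf
  have hclt : q ^ y < 1 := Real.rpow_lt_one hq0.le hq1 hy
  have hcpos : 0 < q ^ y := Real.rpow_pos_of_pos hq0 _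
  rw [div_le_div_iff₀ (by nlinarith) (by positivity)]
  have key := coreA' hspos
  rw [← hcexp] at key
  calc Real.log q ^ 2 * q ^ y * y ^ 2 = s ^ 2 * q ^ y := by rw [hs]; ring
    _ ≤ (1 - q ^ y) ^ 2 := key
    _ = 1 * (1 - q ^ y) ^ 2 := (one_mul _).symm

-- per-term bound B
lemma qg_perB (hq0 : 0 < q) (hq1 : q < 1) {y : ℝ} (hy : 0 < y) :
    (-Real.log q) ^ 3 * (q ^ y * (1 + q ^ y)) / (1 - q ^ y) ^ 3 ≤ 2 / y ^ 3 := by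
  have hL : Real.log q < 0 := Real.log_neg hq0 hq1
  set s : ℝ := -Real.log q * y with hs
  have hspos : 0 < s := by nlinarith
  have hcexp : q ^ y = Real.exp (-s) := by
    rw [Real.rpow_def_of_pos hq0, hs]; ring_nf
  have hclt : q ^ y < 1 := Real.rpow_lt_one hq0.le hq1 hy
  have hcpos : 0 < q ^ y := Real.rpow_pos_of_pos hq0 _
  have h1c : 0 < 1 - q ^ y := by linarith
  rw [div_le_div_iff₀ (pow_pos h1c 3) (by positivity)]
  have key := coreB' hspos
  rw [← hcexp] at key
  calc (-Real.log q) ^ 3 * (q ^ y * (1 + q ^ y)) * y ^ 3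
      = s ^ 3 * q ^ y * (1 + q ^ y) := by rw [hs]; ring
    _ ≤ 2 * (1 - q ^ y) ^ 3 := key

-- telescoping
lemma qg_tele {f : ℕ → ℝ} (hmono : ∀ n, f (n + 1) ≤ f n) (hlim : Tendsto f atTop (nhds 0)) :
    HasSum (fun n => f n - f (n + 1)) (f 0) := by
  rw [hasSum_iff_tendsto_nat_of_nonneg (fun n => sub_nonneg.2 (hmono n))]
  have h : ∀ n, ∑ i ∈ Finset.range n, (f i - f (i + 1)) = f 0 - f n :=
    fun n => Finset.sum_range_sub' f n
  simp only [h]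
  simpa using tendsto_const_nhds.sub hlim

lemma qg_tend1 {x : ℝ} (hx : 0 < x) : Tendsto (fun n : ℕ => 1 / (x + (n:ℝ))) atTop (nhds 0) := by
  have h : Tendsto (fun n : ℕ => x + (n:ℝ)) atTop atTop :=
    tendsto_atTop_add_const_left _ x tendsto_natCast_atTop_atTop
  simpa [one_div, Pi.inv_def] using h.inv_tendsto_atTop

lemma qg_tend2 {x : ℝ} (hx : 0 < x) :
    Tendsto (fun n : ℕ => 1 / (x + (n:ℝ)) ^ 2) atTop (nhds 0) := by
  have h : Tendsto (fun n : ℕ => x + (n:ℝ)) atTop atTop :=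
    tendsto_atTop_add_const_left _ x tendsto_natCast_atTop_atTop
  have h2 : Tendsto (fun n : ℕ => (x + (n:ℝ)) ^ 2) atTop atTop := (tendsto_pow_atTop (by norm_num : (2:ℕ) ≠ 0)).comp h
  simpa [one_div, Pi.inv_def] using h2.inv_tendsto_atTop

lemma qg_hasSum_tele1 {x : ℝ} (hx : 0 < x) :
    HasSum (fun i : ℕ => 1 / (x + (i:ℝ)) - 1 / (x + ((i:ℕ) + 1 : ℕ):ℝ)) (1 / x) := by
  have h := qg_tele (f := fun n : ℕ => 1 / (x + (n:ℝ)))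
    (fun n => by
      apply one_div_le_one_div_of_le (by positivity)
      push_cast; linarith)
    (qg_tend1 hx)
  simpa using h

lemma qg_hasSum_tele2 {x : ℝ} (hx : 0 < x) :
    HasSum (fun i : ℕ => 1 / (x + (i:ℝ)) ^ 2 - 1 / (x + ((i:ℕ) + 1 : ℕ):ℝ) ^ 2) (1 / x ^ 2) := by
  have h := qg_tele (f := fun n : ℕ => 1 / (x + (n:ℝ)) ^ 2)
    (fun n => by
      apply one_div_le_one_div_of_le (by positivity)
      have : (x + (n:ℝ)) ≤ x + ((n:ℝ) + 1) := by linarith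
      push_cast
      nlinarith [hx, (Nat.cast_nonneg n : (0:ℝ) ≤ n)])
    (qg_tend2 hx)
  simpa using h

end C
section D
variable {q : ℝ}
-- key inequality 1 : ∑ of -T2 terms < 1/x
lemma qg_I1 (hq0 : 0 < q) (hq1 : q < 1) {x : ℝ} (hx : 0 < x) : -qgT2 q x < 1 / x := by
  have hT2 : -qgT2 q x
      = ∑' i : ℕ, Real.log q ^ 2 * q ^ (x + 1 + (i:ℝ)) / (1 - q ^ (x + 1 + (i:ℝ))) ^ 2 := by
    rw [qgT2, tsum_neg, neg_neg]
  rw [hT2]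
  have hle : ∀ i : ℕ, Real.log q ^ 2 * q ^ (x + 1 + (i:ℝ)) / (1 - q ^ (x + 1 + (i:ℝ))) ^ 2
      < 1 / (x + (i:ℝ)) - 1 / (x + ((i:ℕ) + 1 : ℕ):ℝ) := by
    intro i
    have hy : 0 < x + 1 + (i:ℝ) := by positivity
    have h1 := qg_perA hq0 hq1 hy
    have ha : 0 < x + (i:ℝ) := by positivity
    have hb : 0 < x + (i:ℝ) + 1 := by positivity
    have hg : 1 / (x + (i:ℝ)) - 1 / (x + ((i:ℕ) + 1 : ℕ):ℝ)
        = 1 / ((x + (i:ℝ)) * (x + (i:ℝ) + 1)) := by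
      push_cast
      rw [show x + ((i:ℝ) + 1) = x + (i:ℝ) + 1 from by ring]
      field_simp
      ring
    rw [hg]
    refine lt_of_le_of_lt h1 ?_
    rw [div_lt_div_iff₀ (by positivity) (by positivity)]
    nlinarith
  have hpos : ∀ i : ℕ, 0 ≤ Real.log q ^ 2 * q ^ (x + 1 + (i:ℝ)) / (1 - q ^ (x + 1 + (i:ℝ))) ^ 2 := by
    intro i
    have := qgc_pos hq0 i x
    positivity
  calc (∑' i : ℕ, Real.log q ^ 2 * q ^ (x + 1 + (i:ℝ)) / (1 - q ^ (x + 1 + (i:ℝ))) ^ 2)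
      < ∑' i : ℕ, (1 / (x + (i:ℝ)) - 1 / (x + ((i:ℕ) + 1 : ℕ):ℝ)) :=
        Summable.tsum_lt_tsum_of_nonneg hpos (fun i => (hle i).le) (hle 0) (qg_hasSum_tele1 hx).summable
    _ = 1 / x := (qg_hasSum_tele1 hx).tsum_eq

lemma qg_I2 (hq0 : 0 < q) (hq1 : q < 1) {x : ℝ} (hx : 0 < x) : qgT3 q x < 1 / x ^ 2 := by
  rw [qgT3]
  have hle : ∀ i : ℕ, (-Real.log q) ^ 3 * (q ^ (x + 1 + (i:ℝ)) * (1 + q ^ (x + 1 + (i:ℝ))))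
        / (1 - q ^ (x + 1 + (i:ℝ))) ^ 3
      < 1 / (x + (i:ℝ)) ^ 2 - 1 / (x + ((i:ℕ) + 1 : ℕ):ℝ) ^ 2 := by
    intro i
    have hy : 0 < x + 1 + (i:ℝ) := by positivity
    have h1 := qg_perB hq0 hq1 hy
    have ha : 0 < x + (i:ℝ) := by positivity
    have hb : 0 < x + (i:ℝ) + 1 := by positivity
    have hg : 1 / (x + (i:ℝ)) ^ 2 - 1 / (x + ((i:ℕ) + 1 : ℕ):ℝ) ^ 2
        = (2 * (x + (i:ℝ)) + 1) / ((x + (i:ℝ)) ^ 2 * (x + (i:ℝ) + 1) ^ 2) := by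
      push_cast
      rw [show x + ((i:ℝ) + 1) = x + (i:ℝ) + 1 from by ring]
      field_simp
      ring
    rw [hg]
    refine lt_of_le_of_lt h1 ?_
    rw [div_lt_div_iff₀ (by positivity) (by positivity)]
    have hkey : 2 * (x + (i:ℝ)) ^ 2 < (2 * (x + (i:ℝ)) + 1) * (x + (i:ℝ) + 1) := by nlinarith
    have h2 : x + 1 + (i:ℝ) = x + (i:ℝ) + 1 := by ring
    rw [h2]
    nlinarith [sq_nonneg (x + (i:ℝ) + 1), mul_pos hb hb, mul_pos (mul_pos hb hb) hb]
  have hpos : ∀ i : ℕ, 0 ≤ (-Real.log q) ^ 3 * (q ^ (x + 1 + (i:ℝ)) * (1 + q ^ (x + 1 + (i:ℝ))))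
        / (1 - q ^ (x + 1 + (i:ℝ))) ^ 3 := by
    intro i
    have hc := qgc_pos hq0 i x
    have hL : 0 < -Real.log q := by have := Real.log_neg hq0 hq1; linarith
    have hlt : q ^ (x + 1 + (i:ℝ)) < 1 := qgc_lt_one hq0 hq1 (by linarith) i
    have h1c : 0 < 1 - q ^ (x + 1 + (i:ℝ)) := by linarith
    positivity
  calc (∑' i : ℕ, (-Real.log q) ^ 3 * (q ^ (x + 1 + (i:ℝ)) * (1 + q ^ (x + 1 + (i:ℝ))))
        / (1 - q ^ (x + 1 + (i:ℝ))) ^ 3)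
      < ∑' i : ℕ, (1 / (x + (i:ℝ)) ^ 2 - 1 / (x + ((i:ℕ) + 1 : ℕ):ℝ) ^ 2) :=
        Summable.tsum_lt_tsum_of_nonneg hpos (fun i => (hle i).le) (hle 0) (qg_hasSum_tele2 hx).summable
    _ = 1 / x ^ 2 := (qg_hasSum_tele2 hx).tsum_eq

end D
section
variable {q : ℝ}

noncomputable def qgU (q x : ℝ) : ℝ := qgT q x - qgT q 0 - x * qgT1 q x - x
noncomputable def qgW (q x : ℝ) : ℝ := -(x * qgT2 q x) - 1
noncomputable def qgV (q x : ℝ) : ℝ := x * qgW q x - 2 * qgU q x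
noncomputable def qgF (q x : ℝ) : ℝ := (qgT q 0 - qgT q x) / x - Real.log (1 - q) - Real.log x
noncomputable def qgG (q x : ℝ) : ℝ := qgU q x / x ^ 2

lemma qg_hdU (hq0 : 0 < q) (hq1 : q < 1) {x : ℝ} (hx : x ∈ Set.Ioi (-(1/2):ℝ)) :
    HasDerivAt (qgU q) (qgW q x) x := by
  have h := (((qg_hdT hq0 hq1 hx).sub_const (qgT q 0)).fun_sub
      ((hasDerivAt_id x).fun_mul (qg_hdT1 hq0 hq1 hx))).fun_sub (hasDerivAt_id x)
  refine h.congr_deriv (Eq.symm ?_)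
  simp [qgW]

lemma qg_hdW (hq0 : 0 < q) (hq1 : q < 1) {x : ℝ} (hx : x ∈ Set.Ioi (-(1/2):ℝ)) :
    HasDerivAt (qgW q) (-qgT2 q x - x * qgT3 q x) x := by
  have h := (((hasDerivAt_id x).fun_mul (qg_hdT2 hq0 hq1 hx)).fun_neg).sub_const 1
  refine h.congr_deriv (Eq.symm ?_)
  simp only [id_eq]
  ring

lemma qg_hdV (hq0 : 0 < q) (hq1 : q < 1) {x : ℝ} (hx : x ∈ Set.Ioi (-(1/2):ℝ)) :
    HasDerivAt (qgV q) (1 - x ^ 2 * qgT3 q x) x := by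
  have h := ((hasDerivAt_id x).fun_mul (qg_hdW hq0 hq1 hx)).fun_sub ((qg_hdU hq0 hq1 hx).const_mul 2)
  refine h.congr_deriv (Eq.symm ?_)
  simp only [qgW, id_eq]
  ring

lemma qg_mem_s {x : ℝ} (hx : x ∈ Set.Ici (0:ℝ)) : x ∈ Set.Ioi (-(1/2):ℝ) := by
  simp only [Set.mem_Ici] at hx
  simp only [Set.mem_Ioi]
  linarith

lemma qg_U_neg (hq0 : 0 < q) (hq1 : q < 1) {x : ℝ} (hx : 0 < x) : qgU q x < 0 := by
  have hanti : StrictAntiOn (qgU q) (Set.Ici 0) := by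
    apply strictAntiOn_of_deriv_neg (convex_Ici 0)
    · exact fun y hy => (qg_hdU hq0 hq1 (qg_mem_s hy)).continuousAt.continuousWithinAt
    · intro y hy
      rw [interior_Ici] at hy
      have hy' : 0 < y := hy
      rw [(qg_hdU hq0 hq1 (qg_mem_s (Set.mem_Ici_of_Ioi hy))).deriv]
      have hI1 := qg_I1 hq0 hq1 hy'
      have : y * -qgT2 q y < y * (1 / y) := mul_lt_mul_of_pos_left hI1 hy'
      rw [mul_one_div, div_self hy'.ne'] at this
      simp only [qgW]
      linarith
  have h := hanti (Set.self_mem_Ici) (Set.mem_Ici_of_Ioi hx) hx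
  have h0 : qgU q 0 = 0 := by simp [qgU]
  linarith [h, h0.symm.le]

lemma qg_V_pos (hq0 : 0 < q) (hq1 : q < 1) {x : ℝ} (hx : 0 < x) : 0 < qgV q x := by
  have hmono : StrictMonoOn (qgV q) (Set.Ici 0) := by
    apply strictMonoOn_of_deriv_pos (convex_Ici 0)
    · exact fun y hy => (qg_hdV hq0 hq1 (qg_mem_s hy)).continuousAt.continuousWithinAt
    · intro y hy
      rw [interior_Ici] at hy
      have hy' : 0 < y := hy
      rw [(qg_hdV hq0 hq1 (qg_mem_s (Set.mem_Ici_of_Ioi hy))).deriv]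
      have hI2 := qg_I2 hq0 hq1 hy'
      have : y ^ 2 * qgT3 q y < y ^ 2 * (1 / y ^ 2) :=
        mul_lt_mul_of_pos_left hI2 (pow_pos hy' 2)
      rw [mul_one_div, div_self (pow_pos hy' 2).ne'] at this
      linarith
  have h := hmono (Set.self_mem_Ici) (Set.mem_Ici_of_Ioi hx) hx
  have h0 : qgV q 0 = 0 := by simp [qgV, qgU]
  linarith [h, h0.symm.le]

lemma qg_hdF (hq0 : 0 < q) (hq1 : q < 1) {x : ℝ} (hx : 0 < x) :
    HasDerivAt (qgF q) (qgG q x) x := by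
  have hmem : x ∈ Set.Ioi (-(1/2):ℝ) := by simp only [Set.mem_Ioi]; linarith
  have h1 : HasDerivAt (fun y : ℝ => (qgT q 0 - qgT q y) / y)
      ((-qgT1 q x * x - (qgT q 0 - qgT q x) * 1) / x ^ 2) x := by
    apply HasDerivAt.div _ (hasDerivAt_id x) hx.ne'
    simpa using (hasDerivAt_const x (qgT q 0)).fun_sub (qg_hdT hq0 hq1 hmem)
  have h2 := (h1.sub_const (Real.log (1 - q))).fun_sub (Real.hasDerivAt_log hx.ne')
  refine h2.congr_deriv (Eq.symm ?_)
  simp only [qgG, qgU]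
  field_simp
  ring

lemma qg_hdG (hq0 : 0 < q) (hq1 : q < 1) {x : ℝ} (hx : 0 < x) :
    HasDerivAt (qgG q) (qgV q x / x ^ 3) x := by
  have hmem : x ∈ Set.Ioi (-(1/2):ℝ) := by simp only [Set.mem_Ioi]; linarith
  have h := (qg_hdU hq0 hq1 hmem).fun_div (hasDerivAt_pow 2 x) (by positivity)
  refine h.congr_deriv (Eq.symm ?_)
  simp only [qgV, qgW]
  field_simp
  ring

lemma qg_F_anti (hq0 : 0 < q) (hq1 : q < 1) : StrictAntiOn (qgF q) (Set.Ioi 0) := by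
  apply strictAntiOn_of_deriv_neg (convex_Ioi 0)
  · exact fun y hy => (qg_hdF hq0 hq1 hy).continuousAt.continuousWithinAt
  · intro y hy
    rw [interior_Ioi] at hy
    have hy' : 0 < y := hy
    rw [(qg_hdF hq0 hq1 hy').deriv]
    exact div_neg_of_neg_of_pos (qg_U_neg hq0 hq1 hy') (pow_pos hy' 2)

lemma qg_F_convex (hq0 : 0 < q) (hq1 : q < 1) : StrictConvexOn ℝ (Set.Ioi 0) (qgF q) := by
  apply StrictMonoOn.strictConvexOn_of_deriv (convex_Ioi 0)
  · exact fun y hy => (qg_hdF hq0 hq1 hy).continuousAt.continuousWithinAt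
  · rw [interior_Ioi]
    have hG : StrictMonoOn (qgG q) (Set.Ioi 0) := by
      apply strictMonoOn_of_deriv_pos (convex_Ioi 0)
      · exact fun y hy => (qg_hdG hq0 hq1 hy).continuousAt.continuousWithinAt
      · intro y hy
        rw [interior_Ioi] at hy
        have hy' : 0 < y := hy
        rw [(qg_hdG hq0 hq1 hy').deriv]
        exact div_pos (qg_V_pos hq0 hq1 hy') (pow_pos hy' 3)
    intro a ha b hb hab
    rw [(qg_hdF hq0 hq1 ha).deriv, (qg_hdF hq0 hq1 hb).deriv]
    exact hG ha hb hab

lemma qg_log_qGamma (hq0 : 0 < q) (hq1 : q < 1) {x : ℝ} (hx : 0 < x) :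
    Real.log (qGamma q (x + 1)) = qgT q 0 - qgT q x - x * Real.log (1 - q) := by
  have h1q : 0 < 1 - q := by linarith
  have key : ∀ y : ℝ, y ∈ Set.Ioi (-(1/2):ℝ) →
      Real.exp (qgT q y) = ∏' i : ℕ, (1 - q ^ (y + 1 + (i:ℝ))) := by
    intro y hy
    have hy' : -(1/2) < y := hy
    exact Real.rexp_tsum_eq_tprod (f := fun (i : ℕ) => 1 - q ^ (y + 1 + (i:ℝ)))
      (fun i => by
        show (0:ℝ) < 1 - q ^ (y + 1 + (i:ℝ))
        linarith [qgc_lt_one hq0 hq1 hy' i])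
      (qg_log_summable hq0 hq1 hy')
  have hnum : (∏' i : ℕ, (1 - q ^ (i + 1))) = Real.exp (qgT q 0) := by
    rw [key 0 (by norm_num)]
    apply tprod_congr
    intro i
    rw [show (0:ℝ) + 1 + (i:ℝ) = ((i + 1 : ℕ):ℝ) by push_cast; ring, Real.rpow_natCast]
  have hden : (∏' i : ℕ, (1 - q ^ (x + 1 + (i:ℝ)))) = Real.exp (qgT q x) :=
    (key x (by simp only [Set.mem_Ioi]; linarith)).symm
  rw [qGamma, hnum, hden, ← Real.exp_sub, show (1:ℝ) - (x + 1) = -x by ring,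
    Real.log_mul (Real.exp_ne_zero _) (Real.rpow_pos_of_pos h1q _).ne',
    Real.log_exp, Real.log_rpow h1q]
  ring

/-- F(x) = (Γ_q(x+1))^{1/x}/x is strictly decreasing and strictly
log-convex on (0,∞), i.e. x ↦ (1/x) log Γ_q(x+1) - log x is strictly decreasing
and strictly convex there. -/
theorem qGamma_root_div_strictAnti_strictConvex (q : ℝ) (hq0 : 0 < q) (hq1 : q < 1) :
    StrictAntiOn (fun x => (1 / x) * Real.log (qGamma q (x + 1)) - Real.log x) (Set.Ioi 0) ∧
    StrictConvexOn ℝ (Set.Ioi 0)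
      (fun x => (1 / x) * Real.log (qGamma q (x + 1)) - Real.log x) := by
  have heq : ∀ x ∈ Set.Ioi (0:ℝ),
      (1 / x) * Real.log (qGamma q (x + 1)) - Real.log x = qgF q x := by
    intro x hx
    simp only [Set.mem_Ioi] at hx
    rw [qg_log_qGamma hq0 hq1 hx]
    simp only [qgF]
    field_simp
  constructor
  · intro a ha b hb hab
    simp only
    rw [heq a ha, heq b hb]
    exact qg_F_anti hq0 hq1 ha hb hab
  · refine ⟨convex_Ioi 0, fun x hx y hy hxy a b ha hb hab => ?_⟩
    have hmem : a • x + b • y ∈ Set.Ioi (0:ℝ) := (convex_Ioi 0) hx hy ha.le hb.le hab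
    have h2 := (qg_F_convex hq0 hq1).2 hx hy hxy ha hb hab
    dsimp only
    rw [heq _ hx, heq _ hy, heq _ hmem]
    exact h2

end
end

section
/- Let 0<q<1, let n be a positive integer, and let x₁,…,x_n > 0. Then ∏_{i=1}^n Γ_q(x_i) ≤ ([∑_{i=1}^n x_i]_q / ∏_{i=1}^n [x_i]_q) · Γ_q(∑_{i=1}^n x_i). -/
open Real

section Aux
variable {q : ℝ}

lemma qg_term_pos (hq0 : 0 < q) (hq1 : q < 1) {x : ℝ} (hx : 0 < x) (i : ℕ) :
    0 < 1 - q ^ (x + (i : ℝ)) := by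
  have : q ^ (x + (i : ℝ)) < 1 :=
    Real.rpow_lt_one hq0.le hq1 (by positivity)
  linarith

lemma qg_summable_log (hq0 : 0 < q) (hq1 : q < 1) {x : ℝ} (hx : 0 < x) :
    Summable fun i : ℕ => Real.log (1 - q ^ (x + (i : ℝ))) := by
  rw [← summable_abs_iff]
  have hqx1 : q ^ x < 1 := Real.rpow_lt_one hq0.le hq1 hx
  have hqx0 : 0 < q ^ x := Real.rpow_pos_of_pos hq0 x
  apply Summable.of_nonneg_of_le (fun i => abs_nonneg _) (fun i => ?_)
    (Summable.mul_left (q ^ x / (1 - q ^ x)) (summable_geometric_of_lt_one hq0.le hq1))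
  set t := q ^ (x + (i : ℝ)) with ht
  have ht0 : 0 < t := Real.rpow_pos_of_pos hq0 _
  have htx : t ≤ q ^ x * q ^ i := by
    rw [ht, ← Real.rpow_natCast q i, ← Real.rpow_add hq0]
  have htq : t ≤ q ^ x := by
    have := Real.rpow_le_rpow_of_exponent_ge hq0 hq1.le
      (le_add_of_nonneg_right (Nat.cast_nonneg i) : x ≤ x + (i:ℝ))
    exact this
  have h1t : 0 < 1 - t := qg_term_pos hq0 hq1 hx i
  have hlog : Real.log (1 - t) ≤ 0 := Real.log_nonpos (by linarith) (by linarith)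
  rw [abs_of_nonpos hlog]
  have : -Real.log (1 - t) = Real.log (1 - t)⁻¹ := by rw [Real.log_inv]
  rw [this]
  have hle : Real.log (1 - t)⁻¹ ≤ (1 - t)⁻¹ - 1 :=
    Real.log_le_sub_one_of_pos (by positivity)
  have : (1 - t)⁻¹ - 1 = t / (1 - t) := by field_simp; ring
  rw [this] at hle
  refine hle.trans ?_
  rw [div_mul_eq_mul_div, div_le_div_iff₀ h1t (by linarith : (0:ℝ) < 1 - q ^ x)]
  have hqi : (0:ℝ) ≤ q ^ i := by positivity
  nlinarith [mul_le_mul_of_nonneg_right htq (le_of_lt h1t)]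

lemma qg_hasProd (hq0 : 0 < q) (hq1 : q < 1) {x : ℝ} (hx : 0 < x) :
    HasProd (fun i : ℕ => 1 - q ^ (x + (i : ℝ)))
      (Real.exp (∑' i : ℕ, Real.log (1 - q ^ (x + (i : ℝ))))) := by
  have h := (qg_summable_log hq0 hq1 hx).hasSum.rexp
  have e : (rexp ∘ fun i : ℕ => Real.log (1 - q ^ (x + (i : ℝ))))
      = fun i : ℕ => 1 - q ^ (x + (i : ℝ)) :=
    funext fun i => Real.exp_log (qg_term_pos hq0 hq1 hx i)
  rwa [e] at h

lemma qg_P_pos (hq0 : 0 < q) (hq1 : q < 1) {x : ℝ} (hx : 0 < x) :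
    0 < ∏' i : ℕ, (1 - q ^ (x + (i : ℝ))) := by
  rw [(qg_hasProd hq0 hq1 hx).tprod_eq]
  exact Real.exp_pos _

lemma qg_P_mult (hq0 : 0 < q) (hq1 : q < 1) {x : ℝ} (hx : 0 < x) :
    Multipliable fun i : ℕ => 1 - q ^ (x + (i : ℝ)) :=
  (qg_hasProd hq0 hq1 hx).multipliable

set_option maxHeartbeats 1000000 in
lemma qg_P_shift (hq0 : 0 < q) (hq1 : q < 1) {x : ℝ} (hx : 0 < x) :
    (∏' i : ℕ, (1 - q ^ (x + (i : ℝ))))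
      = (1 - q ^ x) * ∏' i : ℕ, (1 - q ^ ((x + 1) + (i : ℝ))) := by
  have hm : Multipliable (fun n : ℕ => 1 - q ^ (x + ((n + 1 : ℕ) : ℝ))) :=
    (qg_P_mult hq0 hq1 (by linarith : (0:ℝ) < x + 1)).congr fun i => by
      rw [show x + ((i + 1 : ℕ) : ℝ) = (x + 1) + (i : ℝ) by push_cast; ring]
  rw [tprod_eq_zero_mul' hm]
  congr 1
  · norm_num
  · exact tprod_congr fun i => by
      rw [show x + ((i + 1 : ℕ) : ℝ) = (x + 1) + (i : ℝ) by push_cast; ring]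

lemma qg_tprod_le_tprod {f g : ℕ → ℝ} (h : ∀ i, f i ≤ g i) (h0 : ∀ i, 0 ≤ f i)
    (hf : Multipliable f) (hg : Multipliable g) : ∏' i, f i ≤ ∏' i, g i :=
  le_of_tendsto_of_tendsto' hf.hasProd hg.hasProd fun s =>
    Finset.prod_le_prod (fun i _ => h0 i) (fun i _ => h i)

lemma qg_C_eq : (∏' i : ℕ, (1 - q ^ (i + 1)))
    = ∏' i : ℕ, (1 - q ^ ((1:ℝ) + (i : ℝ))) :=
  tprod_congr fun i => by
    rw [← Real.rpow_natCast q (i + 1)]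
    norm_num
    ring_nf

lemma qg_C_pos (hq0 : 0 < q) (hq1 : q < 1) : 0 < ∏' i : ℕ, (1 - q ^ (i + 1)) := by
  rw [qg_C_eq]; exact qg_P_pos hq0 hq1 one_pos

lemma qg_key_prod (hq0 : 0 < q) (hq1 : q < 1) {a b : ℝ} (ha : 0 < a) (hb : 0 < b) :
    (∏' i : ℕ, (1 - q ^ ((1:ℝ) + (i : ℝ)))) * (∏' i : ℕ, (1 - q ^ ((a + b + 1) + (i : ℝ))))
      ≤ (∏' i : ℕ, (1 - q ^ ((a + 1) + (i : ℝ)))) * ∏' i : ℕ, (1 - q ^ ((b + 1) + (i : ℝ))) := by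
  have m1 := qg_P_mult hq0 hq1 (by norm_num : (0:ℝ) < 1)
  have m2 := qg_P_mult hq0 hq1 (by linarith : (0:ℝ) < a + b + 1)
  have m3 := qg_P_mult hq0 hq1 (by linarith : (0:ℝ) < a + 1)
  have m4 := qg_P_mult hq0 hq1 (by linarith : (0:ℝ) < b + 1)
  rw [← Multipliable.tprod_mul m1 m2, ← Multipliable.tprod_mul m3 m4]
  refine qg_tprod_le_tprod (fun i => ?_) (fun i => ?_) (m1.mul m2) (m3.mul m4)
  · have e1 : q ^ ((a + 1) + (i : ℝ)) = q ^ a * q ^ ((1:ℝ) + (i : ℝ)) := by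
      rw [← Real.rpow_add hq0]; congr 1; ring
    have e2 : q ^ ((b + 1) + (i : ℝ)) = q ^ b * q ^ ((1:ℝ) + (i : ℝ)) := by
      rw [← Real.rpow_add hq0]; congr 1; ring
    have e3 : q ^ ((a + b + 1) + (i : ℝ)) = q ^ a * q ^ b * q ^ ((1:ℝ) + (i : ℝ)) := by
      rw [← Real.rpow_add hq0, ← Real.rpow_add hq0]; congr 1; ring
    rw [e1, e2, e3]
    have hA : q ^ a < 1 := Real.rpow_lt_one hq0.le hq1 ha
    have hB : q ^ b < 1 := Real.rpow_lt_one hq0.le hq1 hb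
    have hr : 0 ≤ q ^ ((1:ℝ) + (i : ℝ)) := (Real.rpow_pos_of_pos hq0 _).le
    nlinarith [mul_nonneg (mul_nonneg (by linarith : (0:ℝ) ≤ 1 - q ^ a)
      (by linarith : (0:ℝ) ≤ 1 - q ^ b)) hr]
  · exact mul_nonneg (qg_term_pos hq0 hq1 (by norm_num) i).le
      (qg_term_pos hq0 hq1 (by linarith : (0:ℝ) < a + b + 1) i).le

lemma qg_F_eq (hq0 : 0 < q) (hq1 : q < 1) {x : ℝ} (hx : 0 < x) :
    qBracket q x * qGamma q x
      = (∏' i : ℕ, (1 - q ^ (i + 1))) * (1 - q) ^ (-x)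
        / ∏' i : ℕ, (1 - q ^ ((x + 1) + (i : ℝ))) := by
  have h1q : (0:ℝ) < 1 - q := by linarith
  have hx1 : (0:ℝ) < 1 - q ^ x := by
    have : q ^ x < 1 := Real.rpow_lt_one hq0.le hq1 hx; linarith
  have hP : 0 < ∏' i : ℕ, (1 - q ^ ((x + 1) + (i : ℝ))) := qg_P_pos hq0 hq1 (by linarith)
  rw [qBracket, qGamma, qg_P_shift hq0 hq1 hx,
    show (1:ℝ) - x = 1 + (-x) by ring, Real.rpow_add h1q, Real.rpow_one]
  field_simp

lemma qg_Fkey (hq0 : 0 < q) (hq1 : q < 1) {a b : ℝ} (ha : 0 < a) (hb : 0 < b) :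
    (qBracket q a * qGamma q a) * (qBracket q b * qGamma q b)
      ≤ qBracket q (a + b) * qGamma q (a + b) := by
  have h1q : (0:ℝ) < 1 - q := by linarith
  rw [qg_F_eq hq0 hq1 ha, qg_F_eq hq0 hq1 hb, qg_F_eq hq0 hq1 (by linarith : (0:ℝ) < a + b)]
  have hC : 0 < ∏' i : ℕ, (1 - q ^ (i + 1)) := qg_C_pos hq0 hq1
  have hPa : 0 < ∏' i : ℕ, (1 - q ^ ((a + 1) + (i : ℝ))) := qg_P_pos hq0 hq1 (by linarith)
  have hPb : 0 < ∏' i : ℕ, (1 - q ^ ((b + 1) + (i : ℝ))) := qg_P_pos hq0 hq1 (by linarith)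
  have hPab : 0 < ∏' i : ℕ, (1 - q ^ ((a + b + 1) + (i : ℝ))) := qg_P_pos hq0 hq1 (by linarith)
  have hE : (1 - q) ^ (-a) * (1 - q) ^ (-b) = (1 - q) ^ (-(a + b)) := by
    rw [← Real.rpow_add h1q]; ring_nf
  have hkey := qg_key_prod hq0 hq1 ha hb
  rw [← qg_C_eq] at hkey
  have hEa : (0:ℝ) < (1 - q) ^ (-a) := Real.rpow_pos_of_pos h1q _
  have hEb : (0:ℝ) < (1 - q) ^ (-b) := Real.rpow_pos_of_pos h1q _
  rw [div_mul_div_comm, div_le_div_iff₀ (by positivity) hPab, ← hE]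
  nlinarith [mul_le_mul_of_nonneg_left hkey (by positivity :
    (0:ℝ) ≤ (∏' i : ℕ, (1 - q ^ (i + 1))) * ((1 - q) ^ (-a) * (1 - q) ^ (-b)))]

lemma qg_Fprod (hq0 : 0 < q) (hq1 : q < 1) {ι : Type*} (x : ι → ℝ) :
    ∀ s : Finset ι, s.Nonempty → (∀ i ∈ s, 0 < x i) →
      ∏ i ∈ s, (qBracket q (x i) * qGamma q (x i))
        ≤ qBracket q (∑ i ∈ s, x i) * qGamma q (∑ i ∈ s, x i) := by
  intro s
  induction s using Finset.cons_induction with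
  | empty => intro h; exact absurd h (by simp)
  | cons a t ha ih =>
    intro _ hx
    rcases t.eq_empty_or_nonempty with rfl | ht
    · simp
    · rw [Finset.prod_cons, Finset.sum_cons]
      have hxa : 0 < x a := hx a (Finset.mem_cons_self a t)
      have hxt : ∀ i ∈ t, 0 < x i := fun i hi => hx i (Finset.mem_cons_of_mem hi)
      have hsum : 0 < ∑ i ∈ t, x i := Finset.sum_pos hxt ht
      calc qBracket q (x a) * qGamma q (x a) * ∏ i ∈ t, (qBracket q (x i) * qGamma q (x i))
          ≤ qBracket q (x a) * qGamma q (x a)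
            * (qBracket q (∑ i ∈ t, x i) * qGamma q (∑ i ∈ t, x i)) :=
            mul_le_mul_of_nonneg_left (ih ht hxt)
              (mul_nonneg (qBracket_pos hq0 hq1 hxa).le (qGamma_pos hq0 hq1 hxa).le)
        _ ≤ qBracket q (x a + ∑ i ∈ t, x i) * qGamma q (x a + ∑ i ∈ t, x i) :=
            qg_Fkey hq0 hq1 hxa hsum

end Aux

/-- Petrović-type inequality for the q-gamma function. -/
theorem qGamma_prod_le (q : ℝ) (hq0 : 0 < q) (hq1 : q < 1)
    (n : ℕ) (hn : 0 < n) (x : Fin n → ℝ) (hx : ∀ i, 0 < x i) :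
    ∏ i, qGamma q (x i)
      ≤ qBracket q (∑ i, x i) / (∏ i, qBracket q (x i)) * qGamma q (∑ i, x i) := by
  have hne : (Finset.univ : Finset (Fin n)).Nonempty := by
    simpa [Finset.univ_nonempty_iff] using Fin.pos_iff_nonempty.mp hn
  have h := qg_Fprod hq0 hq1 x Finset.univ hne (fun i _ => hx i)
  rw [Finset.prod_mul_distrib] at h
  have hB : 0 < ∏ i, qBracket q (x i) :=
    Finset.prod_pos fun i _ => qBracket_pos hq0 hq1 (hx i)
  rw [div_mul_eq_mul_div, le_div_iff₀ hB]
  calc (∏ i, qGamma q (x i)) * ∏ i, qBracket q (x i)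
      = (∏ i, qBracket q (x i)) * ∏ i, qGamma q (x i) := by ring
    _ ≤ qBracket q (∑ i, x i) * qGamma q (∑ i, x i) := h
end

section
/- Let 0<q<1. (a) The function x ↦ Γ_q((1-x)/x) is strictly log-convex on (0,1/2], i.e. x ↦ log Γ_q((1-x)/x) is strictly convex there. (b) The function x ↦ Γ_q(1-x)/Γ_q(x) is strictly log-concave on (0,1/2], i.e. x ↦ log Γ_q(1-x) - log Γ_q(x) is strictly concave there. -/
open Real

/-!
Taking logarithms in the product formula and expanding `-log (1 - t) = ∑ₙ tⁿ⁺¹ / (n + 1)` gives,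
with `uₙ = qⁿ⁺¹`,
`log Γ_q(y) = C + (1 - y) log (1 - q) + ∑ₙ uₙ ^ y / ((n + 1) (1 - uₙ))`.
Writing also `-log (1 - q) = ∑ₙ uₙ / (n + 1)`, both claims reduce to a single term of the series:
(a) to strict convexity of `x ↦ u / x + u ^ (1 / x - 1) / (1 - u)` on `(0, 1/2]`, and (b), up to a
linear term, to strict concavity of `x ↦ u ^ (1 - x) - u ^ x` there, both read off the second
derivative.
-/

open Set

theorem StrictConvexOn.const_mul {E : Type*} [AddCommGroup E] [Module ℝ E] {s : Set E}
    {f : E → ℝ} (hf : StrictConvexOn ℝ s f) {c : ℝ} (hc : 0 < c) :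
    StrictConvexOn ℝ s fun x => c * f x :=
  ⟨hf.1, fun x hx y hy hxy a b ha hb hab => by
    simpa only [smul_eq_mul, mul_add, mul_left_comm c] using
      mul_lt_mul_of_pos_left (hf.2 hx hy hxy ha hb hab) hc⟩

theorem StrictConcaveOn.const_mul {E : Type*} [AddCommGroup E] [Module ℝ E] {s : Set E}
    {f : E → ℝ} (hf : StrictConcaveOn ℝ s f) {c : ℝ} (hc : 0 < c) :
    StrictConcaveOn ℝ s fun x => c * f x := by
  have h := hf.neg.const_mul hc
  simp only [Pi.neg_apply, mul_neg] at h
  exact neg_strictConvexOn_iff.1 h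

theorem StrictConvexOn.tsum {ι E : Type*} [AddCommGroup E] [Module ℝ E] [Nonempty ι] {s : Set E}
    {f : ι → E → ℝ} (hf : ∀ i, StrictConvexOn ℝ s (f i))
    (hsum : ∀ x ∈ s, Summable fun i => f i x) :
    StrictConvexOn ℝ s fun x => ∑' i, f i x := by
  obtain ⟨i₀⟩ := ‹Nonempty ι›
  refine ⟨(hf i₀).1, fun x hx y hy hxy a b ha hb hab => ?_⟩
  have hz : a • x + b • y ∈ s := (hf i₀).1 hx hy ha.le hb.le hab
  calc ∑' i, f i (a • x + b • y) < ∑' i, (a * f i x + b * f i y) :=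
        (hsum _ hz).tsum_lt_tsum (fun i => ((hf i).2 hx hy hxy ha hb hab).le)
          ((hf i₀).2 hx hy hxy ha hb hab)
          (((hsum x hx).mul_left a).add ((hsum y hy).mul_left b))
    _ = a • ∑' i, f i x + b • ∑' i, f i y := by
        rw [((hsum x hx).mul_left a).tsum_add ((hsum y hy).mul_left b), tsum_mul_left,
          tsum_mul_left, smul_eq_mul, smul_eq_mul]

theorem StrictConcaveOn.tsum {ι E : Type*} [AddCommGroup E] [Module ℝ E] [Nonempty ι] {s : Set E}
    {f : ι → E → ℝ} (hf : ∀ i, StrictConcaveOn ℝ s (f i))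
    (hsum : ∀ x ∈ s, Summable fun i => f i x) :
    StrictConcaveOn ℝ s fun x => ∑' i, f i x := by
  have h := StrictConvexOn.tsum (fun i => (hf i).neg) fun x hx => (hsum x hx).neg
  simp only [Pi.neg_apply, tsum_neg] at h
  exact neg_strictConvexOn_iff.1 h

theorem strictConvexOn_of_hasDerivAt2_pos {D : Set ℝ} (hD : Convex ℝ D) {f f' f'' : ℝ → ℝ}
    (hf : ContinuousOn f D) (hf' : ∀ x ∈ interior D, HasDerivAt f (f' x) x)
    (hf'' : ∀ x ∈ interior D, HasDerivAt f' (f'' x) x) (hf''₀ : ∀ x ∈ interior D, 0 < f'' x) :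
    StrictConvexOn ℝ D f := by
  have hmono : StrictMonoOn f' (interior D) :=
    strictMonoOn_of_hasDerivWithinAt_pos hD.interior
      (fun x hx => (hf'' x hx).continuousAt.continuousWithinAt)
      (fun x hx => (hf'' x (interior_subset hx)).hasDerivWithinAt)
      (fun x hx => hf''₀ x (interior_subset hx))
  exact (hmono.congr fun x hx => ((hf' x hx).deriv).symm).strictConvexOn_of_deriv hD hf

theorem strictConcaveOn_of_hasDerivAt2_neg {D : Set ℝ} (hD : Convex ℝ D) {f f' f'' : ℝ → ℝ}
    (hf : ContinuousOn f D) (hf' : ∀ x ∈ interior D, HasDerivAt f (f' x) x)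
    (hf'' : ∀ x ∈ interior D, HasDerivAt f' (f'' x) x) (hf''₀ : ∀ x ∈ interior D, f'' x < 0) :
    StrictConcaveOn ℝ D f := by
  simpa only [neg_neg] using (strictConvexOn_of_hasDerivAt2_pos hD hf.neg
    (fun x hx => (hf' x hx).neg) (fun x hx => (hf'' x hx).neg)
    fun x hx => neg_pos.2 (hf''₀ x hx)).neg

theorem Real.exp_lt_one_add_add_sq {b : ℝ} (hb : b < 0) : exp b < 1 + b + b ^ 2 := by
  have h := quadratic_le_exp_of_nonneg (neg_nonneg.2 hb.le)
  have hinv : exp b * exp (-b) = 1 := by rw [← exp_add, add_neg_cancel, exp_zero]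
  nlinarith [exp_pos b, mul_le_mul_of_nonneg_left h (exp_pos b).le, pow_pos (neg_pos.2 hb) 3,
    pow_pos (neg_pos.2 hb) 4]

theorem strictConcaveOn_rpow_one_sub_sub_rpow {u : ℝ} (hu₀ : 0 < u) (hu₁ : u < 1) :
    StrictConcaveOn ℝ (Iic (1 / 2 : ℝ)) fun x => u ^ (1 - x) - u ^ x := by
  have hd₁ (x : ℝ) : HasDerivAt (fun x => u ^ (1 - x)) (-log u * u ^ (1 - x)) x := by
    have h : HasDerivAt (fun x : ℝ => 1 - x) (-1) x := by
      simpa using (hasDerivAt_id x).const_sub (1 : ℝ)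
    simpa using h.const_rpow hu₀
  have hd₂ (x : ℝ) : HasDerivAt (fun x => u ^ x) (log u * u ^ x) x := by
    simpa using (hasDerivAt_id x).const_rpow hu₀
  refine strictConcaveOn_of_hasDerivAt2_neg (convex_Iic _)
    (f := fun x => u ^ (1 - x) - u ^ x)
    (f' := fun x => -log u * (u ^ (1 - x) + u ^ x))
    (f'' := fun x => log u ^ 2 * (u ^ (1 - x) - u ^ x))
    (fun x _ => ((hd₁ x).sub (hd₂ x)).continuousAt.continuousWithinAt)
    (fun x _ => ((hd₁ x).sub (hd₂ x)).congr_deriv (by ring))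
    (fun x _ => (((hd₁ x).add (hd₂ x)).const_mul _).congr_deriv (by ring)) fun x hx => ?_
  rw [interior_Iic, mem_Iio] at hx
  have hlt : u ^ (1 - x) < u ^ x := rpow_lt_rpow_of_exponent_gt hu₀ hu₁ (by linarith)
  have hlog : log u ≠ 0 := (log_neg hu₀ hu₁).ne
  exact mul_neg_of_pos_of_neg (by positivity) (sub_neg.2 hlt)

theorem strictConvexOn_inv_add_rpow_inv_sub_one {u : ℝ} (hu₀ : 0 < u) (hu₁ : u < 1) :
    StrictConvexOn ℝ (Ioc 0 (1 / 2 : ℝ)) fun x => u * x⁻¹ + u ^ (x⁻¹ - 1) / (1 - u) := by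
  set b := log u with hb_def
  have hb : b < 0 := log_neg hu₀ hu₁
  have hv {x : ℝ} (hx : x ≠ 0) :
      HasDerivAt (fun x => u ^ (x⁻¹ - 1)) (b * -(x ^ 2)⁻¹ * u ^ (x⁻¹ - 1)) x :=
    ((hasDerivAt_inv hx).sub_const 1).const_rpow hu₀
  have hderiv {x : ℝ} (hx : x ≠ 0) : HasDerivAt (fun x => u * x⁻¹ + u ^ (x⁻¹ - 1) / (1 - u))
      (-(x ^ 2)⁻¹ * (u + b * u ^ (x⁻¹ - 1) / (1 - u))) x :=
    (((hasDerivAt_inv hx).const_mul u).add ((hv hx).div_const _)).congr_deriv (by ring)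
  have hderiv2 {x : ℝ} (hx : x ≠ 0) :
      HasDerivAt (fun x => -(x ^ 2)⁻¹ * (u + b * u ^ (x⁻¹ - 1) / (1 - u)))
        ((x ^ 4)⁻¹ * (2 * x * (u + b * u ^ (x⁻¹ - 1) / (1 - u)) + b ^ 2 * u ^ (x⁻¹ - 1) / (1 - u)))
        x := by
    have h2 : HasDerivAt (fun x : ℝ => (x ^ 2)⁻¹) (-(2 * x) / (x ^ 2) ^ 2) x := by
      simpa using (hasDerivAt_pow 2 x).fun_inv (pow_ne_zero 2 hx)
    refine (h2.fun_neg.mul ((((hv hx).const_mul b).div_const (1 - u)).const_add u)).congr_deriv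
      ?_
    field_simp
  refine strictConvexOn_of_hasDerivAt2_pos (convex_Ioc _ _)
    (fun x hx => (hderiv hx.1.ne').continuousAt.continuousWithinAt)
    (fun x hx => hderiv (interior_subset hx).1.ne')
    (fun x hx => hderiv2 (interior_subset hx).1.ne')
    fun x hx => ?_
  rw [interior_Ioc, mem_Ioo] at hx
  obtain ⟨hx₀, hx₁⟩ := hx
  set v := u ^ (x⁻¹ - 1)
  have hv_pos : 0 < v := rpow_pos_of_pos hu₀ _
  have hv_le : v ≤ u := by
    simpa using rpow_le_rpow_of_exponent_ge hu₀ hu₁.le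
      (show (1 : ℝ) ≤ x⁻¹ - 1 by rw [le_sub_iff_add_le, le_inv_comm₀ (by norm_num) hx₀]; linarith)
  -- `u = e^b < 1 + b + b²` is what makes the bracket positive when `b + 2x > 0`.
  have hkey : u < 1 + b + b ^ 2 := by
    simpa [hb_def, exp_log hu₀] using exp_lt_one_add_add_sq hb
  have h1u : 0 < 1 - u := by linarith
  have hmain : 0 < 2 * x * u * (1 - u) + v * (b * (b + 2 * x)) := by
    have hu : 0 < 2 * x * u * (1 - u) := by positivity
    rcases le_or_gt (b + 2 * x) 0 with h | h
    · nlinarith [mul_nonneg hv_pos.le (mul_nonneg_of_nonpos_of_nonpos hb.le h)]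
    · have hv_mul : u * (b * (b + 2 * x)) ≤ v * (b * (b + 2 * x)) :=
        mul_le_mul_of_nonpos_right hv_le (mul_nonpos_of_nonpos_of_nonneg hb.le h.le)
      have hlog : 1 - u + b ≤ 0 := by linarith [log_le_sub_one_of_pos hu₀]
      have hpos : 0 < b ^ 2 + 2 * x * (1 - u + b) := by
        nlinarith [mul_nonpos_of_nonneg_of_nonpos (by linarith : (0 : ℝ) ≤ 1 - 2 * x) hlog]
      nlinarith [mul_pos hu₀ hpos]
  have hbracket : 0 < 2 * x * (u + b * v / (1 - u)) + b ^ 2 * v / (1 - u) := by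
    rw [← mul_lt_mul_iff_of_pos_right h1u]
    field_simp
    nlinarith
  exact mul_pos (by positivity) hbracket

noncomputable def qLogGammaSeries (q y : ℝ) : ℝ :=
  ∑' n : ℕ, (q ^ (n + 1)) ^ y / ((n + 1 : ℝ) * (1 - q ^ (n + 1)))

section
variable {q : ℝ}

theorem summable_qLogGammaSeries (hq₀ : 0 ≤ q) (hq₁ : q < 1) {y : ℝ} (hy : 0 < y) :
    Summable fun n : ℕ => (q ^ (n + 1)) ^ y / ((n + 1 : ℝ) * (1 - q ^ (n + 1))) := by
  have hr₁ : q ^ y < 1 := rpow_lt_one hq₀ hq₁ hy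
  refine Summable.of_nonneg_of_le (fun n => ?_) (fun n => ?_)
    ((summable_geometric_of_lt_one (rpow_nonneg hq₀ y) hr₁).mul_left (1 - q)⁻¹)
  · have : q ^ (n + 1) < 1 := pow_lt_one₀ hq₀ hq₁ n.succ_ne_zero
    have : 0 ≤ 1 - q ^ (n + 1) := by linarith
    positivity
  · have hle : q ^ (n + 1) ≤ q := pow_le_of_le_one hq₀ hq₁.le n.succ_ne_zero
    have hden : 1 - q ≤ (n + 1 : ℝ) * (1 - q ^ (n + 1)) := by
      nlinarith [(n.cast_nonneg : (0 : ℝ) ≤ n)]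
    rw [← rpow_pow_comm hq₀, div_eq_inv_mul]
    exact mul_le_mul (inv_anti₀ (by linarith) hden)
      (pow_le_pow_of_le_one (rpow_nonneg hq₀ y) hr₁.le n.le_succ) (by positivity) (by positivity)

theorem hasProd_one_sub_rpow_add (hq₀ : 0 < q) (hq₁ : q < 1) {y : ℝ} (hy : 0 < y) :
    HasProd (fun i : ℕ => 1 - q ^ (y + i)) (exp (-qLogGammaSeries q y)) := by
  set F : ℕ × ℕ → ℝ := fun p => (q ^ (y + p.1)) ^ (p.2 + 1) / (p.2 + 1 : ℝ)
  have hlt (i : ℕ) : q ^ (y + i) < 1 := rpow_lt_one hq₀.le hq₁ (by positivity)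
  have hrow (i : ℕ) : HasSum (fun n => F (i, n)) (-log (1 - q ^ (y + i))) :=
    hasSum_pow_div_log_of_abs_lt_one (x := q ^ (y + i))
      (by rw [abs_of_pos (rpow_pos_of_pos hq₀ _)]; exact hlt i)
  have hcol (n : ℕ) : HasSum (fun i => F (i, n))
      ((q ^ (n + 1)) ^ y / ((n + 1 : ℝ) * (1 - q ^ (n + 1)))) := by
    have hr : q ^ (n + 1) < 1 := pow_lt_one₀ hq₀.le hq₁ n.succ_ne_zero
    have hterm :
        (fun i => F (i, n)) = fun i => (q ^ (n + 1)) ^ y / (n + 1 : ℝ) * (q ^ (n + 1)) ^ i := by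
      funext i
      change (q ^ (y + i)) ^ (n + 1) / (n + 1 : ℝ) = _
      rw [rpow_add hq₀, mul_pow, rpow_pow_comm hq₀.le, rpow_natCast, ← pow_mul, ← pow_mul]
      ring
    have hsum : (q ^ (n + 1)) ^ y / ((n + 1 : ℝ) * (1 - q ^ (n + 1)))
        = (q ^ (n + 1)) ^ y / (n + 1 : ℝ) * (1 - q ^ (n + 1))⁻¹ := by
      rw [div_mul_eq_div_div, div_eq_mul_inv _ (1 - _)]
    rw [hterm, hsum]
    exact (hasSum_geometric_of_lt_one (by positivity) hr).mul_left _
  have hF₀ : 0 ≤ F := fun p => by positivity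
  have hswap : Summable fun p : ℕ × ℕ => F p.swap :=
    (summable_prod_of_nonneg fun p => hF₀ p.swap).2
      ⟨fun n => (hcol n).summable, by
        simpa only [Prod.swap_prod_mk, (hcol _).tsum_eq] using
          summable_qLogGammaSeries hq₀.le hq₁ hy⟩
  have htotal : HasSum F (qLogGammaSeries q y) := by
    have h := hswap.hasSum
    rw [(h.prod_fiberwise hcol).unique (summable_qLogGammaSeries hq₀.le hq₁ hy).hasSum] at h
    exact (Equiv.prodComm ℕ ℕ).hasSum_iff.1 h
  have hlog : HasSum (fun i : ℕ => log (1 - q ^ (y + i))) (-qLogGammaSeries q y) := by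
    simpa using (htotal.prod_fiberwise hrow).neg
  exact hasProd_of_hasSum_log (fun i => sub_pos.2 (hlt i)) hlog

theorem log_qGamma (hq₀ : 0 < q) (hq₁ : q < 1) {y : ℝ} (hy : 0 < y) :
    log (qGamma q y) = qLogGammaSeries q y - qLogGammaSeries q 1 + (1 - y) * log (1 - q) := by
  have hnum : ∏' i : ℕ, (1 - q ^ (i + 1)) = exp (-qLogGammaSeries q 1) := by
    rw [← (hasProd_one_sub_rpow_add hq₀ hq₁ one_pos).tprod_eq]
    congr 1 with i
    rw [← rpow_natCast, add_comm]
    push_cast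
    rfl
  rw [qGamma, hnum, (hasProd_one_sub_rpow_add hq₀ hq₁ hy).tprod_eq, log_mul (by positivity)
    (rpow_pos_of_pos (sub_pos.2 hq₁) _).ne', log_div (by positivity) (by positivity), log_exp,
    log_exp, log_rpow (sub_pos.2 hq₁)]
  ring

theorem strictConvexOn_log_qGamma_one_sub_div (hq₀ : 0 < q) (hq₁ : q < 1) :
    StrictConvexOn ℝ (Ioc 0 (1 / 2)) fun x => log (qGamma q ((1 - x) / x)) := by
  have hL : HasSum (fun n : ℕ => q ^ (n + 1) / (n + 1 : ℝ)) (-log (1 - q)) :=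
    hasSum_pow_div_log_of_abs_lt_one (by rwa [abs_of_pos hq₀])
  have hy {x : ℝ} (hx : x ∈ Ioc (0 : ℝ) (1 / 2)) : 0 < x⁻¹ - 1 := by
    rw [sub_pos, one_lt_inv₀ hx.1]; linarith [hx.2]
  have hsum {x : ℝ} (hx : x ∈ Ioc (0 : ℝ) (1 / 2)) :
      HasSum (fun n : ℕ => (n + 1 : ℝ)⁻¹ *
          (q ^ (n + 1) * x⁻¹ + (q ^ (n + 1)) ^ (x⁻¹ - 1) / (1 - q ^ (n + 1))))
        (-log (1 - q) * x⁻¹ + qLogGammaSeries q (x⁻¹ - 1)) := by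
    refine ((hL.mul_right x⁻¹).add (summable_qLogGammaSeries hq₀.le hq₁ (hy hx)).hasSum).congr_fun
      fun n => ?_
    rw [div_mul_eq_div_div]
    ring
  have hconv := StrictConvexOn.tsum (fun n : ℕ => (strictConvexOn_inv_add_rpow_inv_sub_one
      (pow_pos hq₀ (n + 1)) (pow_lt_one₀ hq₀.le hq₁ n.succ_ne_zero)).const_mul
      (inv_pos.2 n.cast_add_one_pos)) fun x hx => (hsum hx).summable
  refine (hconv.add_const (2 * log (1 - q) - qLogGammaSeries q 1)).congr fun x hx => ?_
  have hdiv : (1 - x) / x = x⁻¹ - 1 := by field_simp [hx.1.ne']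
  rw [Pi.add_apply, (hsum hx).tsum_eq, hdiv, log_qGamma hq₀ hq₁ (hy hx)]
  ring

theorem strictConcaveOn_log_qGamma_one_sub_sub (hq₀ : 0 < q) (hq₁ : q < 1) :
    StrictConcaveOn ℝ (Ioc 0 (1 / 2)) fun x => log (qGamma q (1 - x)) - log (qGamma q x) := by
  have hsum {x : ℝ} (hx : x ∈ Ioc (0 : ℝ) (1 / 2)) :
      HasSum (fun n : ℕ => ((n + 1 : ℝ) * (1 - q ^ (n + 1)))⁻¹ *
          ((q ^ (n + 1)) ^ (1 - x) - (q ^ (n + 1)) ^ x))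
        (qLogGammaSeries q (1 - x) - qLogGammaSeries q x) := by
    refine ((summable_qLogGammaSeries hq₀.le hq₁ (by linarith [hx.2])).hasSum.sub
      (summable_qLogGammaSeries hq₀.le hq₁ hx.1).hasSum).congr_fun fun n => ?_
    ring
  have hconc := StrictConcaveOn.tsum (fun n : ℕ => ((strictConcaveOn_rpow_one_sub_sub_rpow
      (pow_pos hq₀ (n + 1)) (pow_lt_one₀ hq₀.le hq₁ n.succ_ne_zero)).subset Ioc_subset_Iic_self
      (convex_Ioc _ _)).const_mul (inv_pos.2 (mul_pos n.cast_add_one_pos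
        (sub_pos.2 (pow_lt_one₀ hq₀.le hq₁ n.succ_ne_zero))))) fun x hx => (hsum hx).summable
  refine ((hconc.add_concaveOn ((LinearMap.mul ℝ ℝ (2 * log (1 - q))).concaveOn
    (convex_Ioc _ _))).add_const (-log (1 - q))).congr fun x hx => ?_
  simp only [Pi.add_apply, LinearMap.mul_apply']
  rw [(hsum hx).tsum_eq, log_qGamma hq₀ hq₁ (by linarith [hx.2]), log_qGamma hq₀ hq₁ hx.1]
  ring

end

/-- x ↦ Γ_q((1-x)/x) is strictly log-convex and x ↦ Γ_q(1-x)/Γ_q(x)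
is strictly log-concave on (0,1/2]. -/
theorem qGamma_ratio_logConvexity (q : ℝ) (hq0 : 0 < q) (hq1 : q < 1) :
    StrictConvexOn ℝ (Set.Ioc 0 (1 / 2))
      (fun x => Real.log (qGamma q ((1 - x) / x))) ∧
    StrictConcaveOn ℝ (Set.Ioc 0 (1 / 2))
      (fun x => Real.log (qGamma q (1 - x)) - Real.log (qGamma q x)) :=
  ⟨strictConvexOn_log_qGamma_one_sub_div hq0 hq1, strictConcaveOn_log_qGamma_one_sub_sub hq0 hq1⟩
end
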